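/- arXiv:1107.3187 — 3 statements merged into one kernel-verified Lean document; each statement's English description precedes it below -/
import Mathlib

section
/- There exists a nonorientable regular embedding (G,λ,ρ,τ) of the Hamming graph H(2,2) (the 4-cycle) such that G is a dihedral group of order 16, the order of λρ is 8, the order of ρτ is 2, and the order of λρτ is 8. -/
open Subgroup

/-- The Hamming graph `H(d,n)`: vertices are `Fin d → Fin n`, two vertices adjacent
iff they differ in exactly one coordinate. -/
def hammingGraph (d n : ℕ) : SimpleGraph (Fin d → Fin n) where
  Adj u v := ∃! i, u i ≠ v i
  symm := by
    constructor
    rintro u v ⟨i, hi, huniq⟩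
    exact ⟨i, Ne.symm hi, fun j hj => huniq j (Ne.symm hj)⟩
  loopless := by
    constructor
    rintro u ⟨i, hi, -⟩
    exact hi rfl

/-- A quadruple `(G, λ, ρ, τ)` consisting of a finite group and three elements. -/
structure MapQuad where
  G : Type
  [grp : Group G]
  [fin : Finite G]
  l : G
  r : G
  t : G

attribute [instance] MapQuad.grp MapQuad.fin

namespace MapQuad

/-- The algebraic conditions defining a regular map. -/
def IsRegularMap (Q : MapQuad) : Prop :=
  closure ({Q.l, Q.r, Q.t} : Set Q.G) = ⊤ ∧
  Q.l ^ 2 = 1 ∧ Q.r ^ 2 = 1 ∧ Q.t ^ 2 = 1 ∧ Q.r ≠ 1 ∧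
  Q.l * Q.t = Q.t * Q.l ∧
  Nat.card (closure ({Q.l, Q.t} : Set Q.G)) = 4

/-- The vertex stabilizer `⟨ρ, τ⟩`. -/
def vStab (Q : MapQuad) : Subgroup Q.G := closure ({Q.r, Q.t} : Set Q.G)

/-- The underlying graph of a regular map: vertices are the left cosets of `⟨ρ,τ⟩`,
and distinct cosets `x⟨ρ,τ⟩` and `y⟨ρ,τ⟩` are adjacent iff `x⁻¹y ∈ ⟨ρ,τ⟩·λ·⟨ρ,τ⟩`. -/
def underlyingGraph (Q : MapQuad) : SimpleGraph (Q.G ⧸ Q.vStab) :=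
  SimpleGraph.fromRel fun u v => ∃ x y : Q.G,
    (QuotientGroup.mk x : Q.G ⧸ Q.vStab) = u ∧ (QuotientGroup.mk y : Q.G ⧸ Q.vStab) = v ∧
    ∃ h₁ ∈ Q.vStab, ∃ h₂ ∈ Q.vStab, x⁻¹ * y = h₁ * Q.l * h₂

/-- `Q` is a regular embedding of the simple graph `K`. -/
def IsRegularEmbeddingOf (Q : MapQuad) {V : Type*} (K : SimpleGraph V) : Prop :=
  Q.IsRegularMap ∧ Nonempty (Q.underlyingGraph ≃g K) ∧
  Nat.card Q.G = 4 * Nat.card K.edgeSet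

/-- `Q` is nonorientable, i.e. `⟨λτ, ρτ⟩ = G`. -/
def Nonorientable (Q : MapQuad) : Prop :=
  closure ({Q.l * Q.t, Q.r * Q.t} : Set Q.G) = ⊤

/-- Isomorphism of quadruples: a group isomorphism carrying `λ,ρ,τ` to `λ',ρ',τ'`. -/
def Iso (Q Q' : MapQuad) : Prop :=
  ∃ φ : Q.G ≃* Q'.G, φ Q.l = Q'.l ∧ φ Q.r = Q'.r ∧ φ Q.t = Q'.t

end MapQuad

section Aux
open DihedralGroup Subgroup

abbrev D := DihedralGroup 8

instance hammingDec (d n : ℕ) : DecidableRel (hammingGraph d n).Adj := fun u v =>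
  decidable_of_iff (∃ i, u i ≠ v i ∧ ∀ j, u j ≠ v j → j = i) Iff.rfl

def w : Fin 4 → Fin 2 → Fin 2 := ![![0,0], ![0,1], ![1,1], ![1,0]]

def g : D → Fin 2 → Fin 2
  | DihedralGroup.r i => w ⟨i.val % 4, Nat.mod_lt _ (by norm_num)⟩
  | DihedralGroup.sr i => w ⟨(9 - i.val) % 4, Nat.mod_lt _ (by norm_num)⟩

def u (v : Fin 2 → Fin 2) : ZMod 8 :=
  if v 0 = 0 then ((v 1).val : ZMod 8) else ((3 - (v 1).val : ℕ) : ZMod 8)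

def Fv : Finset D := {1, DihedralGroup.r 4, sr 1, sr 5}

def Hv : Subgroup D where
  carrier := {x | x ∈ Fv}
  one_mem' := by decide
  mul_mem' := by intro a b; revert a b; decide
  inv_mem' := by intro a; revert a; decide

instance : DecidablePred (· ∈ Hv) := fun x => inferInstanceAs (Decidable (x ∈ Fv))

def F4 : Finset D := {1, DihedralGroup.r 4, sr 0, sr 4}

def H4 : Subgroup D where
  carrier := {x | x ∈ F4}
  one_mem' := by decide
  mul_mem' := by intro a b; revert a b; decide
  inv_mem' := by intro a; revert a; decide

instance : DecidablePred (· ∈ H4) := fun x => inferInstanceAs (Decidable (x ∈ F4))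

lemma top_of {S : Set D} (h1 : DihedralGroup.r 1 ∈ closure S) (h0 : sr 0 ∈ closure S) :
    closure S = ⊤ := by
  rw [eq_top_iff']
  intro x
  have hr : ∀ n : ℕ, DihedralGroup.r (n : ZMod 8) ∈ closure S := fun n => by
    rw [← r_one_pow]; exact pow_mem h1 n
  have hsr : ∀ n : ℕ, sr (n : ZMod 8) ∈ closure S := fun n => by
    have : sr (n : ZMod 8) = sr 0 * DihedralGroup.r (n : ZMod 8) := by
      rw [sr_mul_r, zero_add]
    rw [this]; exact mul_mem h0 (hr n)
  rcases x with i | i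
  · have := hr i.val; rwa [ZMod.natCast_val, ZMod.cast_id] at this
  · have := hsr i.val; rwa [ZMod.natCast_val, ZMod.cast_id] at this

@[reducible] def myQ : MapQuad := { G := D, l := sr 0, r := sr 1, t := DihedralGroup.r 4 }

lemma vstab_eq : myQ.vStab = Hv := by
  apply le_antisymm
  · refine (closure_le _).mpr ?_
    rintro x (rfl | rfl)
    · exact (by decide : sr 1 ∈ Fv)
    · exact (by decide : DihedralGroup.r 4 ∈ Fv)
  · intro x hx
    have key : ∀ z : D, z ∈ Hv →
        z = 1 ∨ z = DihedralGroup.r 4 ∨ z = sr 1 ∨ z = sr 5 := by decide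
    have h1 : sr 1 ∈ myQ.vStab := subset_closure (by left; rfl)
    have h2 : DihedralGroup.r 4 ∈ myQ.vStab := subset_closure (by right; rfl)
    rcases key x hx with rfl | rfl | rfl | rfl
    · exact one_mem _
    · exact h2
    · exact h1
    · exact (show (sr 5 : D) = sr 1 * DihedralGroup.r 4 by decide) ▸ mul_mem h1 h2

lemma h4_eq : closure ({myQ.l, myQ.t} : Set myQ.G) = H4 := by
  apply le_antisymm
  · refine (closure_le _).mpr ?_
    rintro x (rfl | rfl)
    · exact (by decide : sr 0 ∈ F4)
    · exact (by decide : DihedralGroup.r 4 ∈ F4)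
  · intro x hx
    have key : ∀ z : D, z ∈ H4 →
        z = 1 ∨ z = DihedralGroup.r 4 ∨ z = sr 0 ∨ z = sr 4 := by decide
    have h1 : sr 0 ∈ closure ({myQ.l, myQ.t} : Set myQ.G) := subset_closure (by left; rfl)
    have h2 : DihedralGroup.r 4 ∈ closure ({myQ.l, myQ.t} : Set myQ.G) :=
      subset_closure (by right; rfl)
    rcases key x hx with rfl | rfl | rfl | rfl
    · exact one_mem _
    · exact h2
    · exact h1
    · exact (show (sr 4 : D) = sr 0 * DihedralGroup.r 4 by decide) ▸ mul_mem h1 h2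

lemma gkey : ∀ a b : D, a⁻¹ * b ∈ Hv → g a = g b := by decide

def fwd (q : D ⧸ myQ.vStab) : Fin 2 → Fin 2 :=
  Quotient.liftOn' q g fun a b h =>
    gkey a b (vstab_eq ▸ (QuotientGroup.leftRel_apply.mp h))

lemma fwd_mk (x : D) : fwd (QuotientGroup.mk x) = g x := rfl

def bwd (v : Fin 2 → Fin 2) : D ⧸ myQ.vStab := QuotientGroup.mk (DihedralGroup.r (u v))

lemma key_left : ∀ x : D, (DihedralGroup.r (u (g x)))⁻¹ * x ∈ Hv := by decide

lemma key_right : ∀ v : Fin 2 → Fin 2, g (DihedralGroup.r (u v)) = v := by decide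

def myEquiv : (D ⧸ myQ.vStab) ≃ (Fin 2 → Fin 2) where
  toFun := fwd
  invFun := bwd
  left_inv := by
    intro q
    induction q using QuotientGroup.induction_on with
    | _ x =>
      show QuotientGroup.mk (DihedralGroup.r (u (g x))) = QuotientGroup.mk x
      rw [QuotientGroup.eq, vstab_eq]
      exact key_left x
  right_inv := fun v => key_right v

lemma rel_iff (x y : D) :
    (∃ x' y' : D, QuotientGroup.mk x' = (QuotientGroup.mk x : D ⧸ myQ.vStab) ∧
      QuotientGroup.mk y' = (QuotientGroup.mk y : D ⧸ myQ.vStab) ∧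
      ∃ h₁ ∈ myQ.vStab, ∃ h₂ ∈ myQ.vStab, x'⁻¹ * y' = h₁ * myQ.l * h₂) ↔
    (∃ h₁ ∈ Hv, ∃ h₂ ∈ Hv, x⁻¹ * y = h₁ * sr 0 * h₂) := by
  rw [← vstab_eq]
  constructor
  · rintro ⟨x', y', hx, hy, h1, m1, h2, m2, heq⟩
    rw [QuotientGroup.eq] at hx hy
    refine ⟨(x'⁻¹ * x)⁻¹ * h1, mul_mem (inv_mem hx) m1,
      h2 * (y'⁻¹ * y), mul_mem m2 hy, ?_⟩
    have hc : (x'⁻¹ * x)⁻¹ * h1 * myQ.l * (h2 * (y'⁻¹ * y)) =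
        (x⁻¹ * x') * (h1 * myQ.l * h2) * (y'⁻¹ * y) := by group
    rw [hc, ← heq]; group
  · rintro ⟨h1, m1, h2, m2, heq⟩
    exact ⟨x, y, rfl, rfl, h1, m1, h2, m2, heq⟩

lemma key_adj : ∀ x y : D, (hammingGraph 2 2).Adj (g x) (g y) ↔
    (¬ x⁻¹ * y ∈ Hv ∧
      ((∃ h₁ ∈ Hv, ∃ h₂ ∈ Hv, x⁻¹ * y = h₁ * sr 0 * h₂) ∨
       (∃ h₁ ∈ Hv, ∃ h₂ ∈ Hv, y⁻¹ * x = h₁ * sr 0 * h₂))) := by decide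

lemma adj_iff (x y : D) : (hammingGraph 2 2).Adj (g x) (g y) ↔
    myQ.underlyingGraph.Adj (QuotientGroup.mk x) (QuotientGroup.mk y) := by
  rw [MapQuad.underlyingGraph, SimpleGraph.fromRel_adj]
  rw [key_adj x y]
  constructor
  · rintro ⟨hne, h⟩
    refine ⟨?_, ?_⟩
    · intro hc
      rw [QuotientGroup.eq, vstab_eq] at hc
      exact hne hc
    · rcases h with h | h
      · exact Or.inl ((rel_iff x y).mpr h)
      · exact Or.inr ((rel_iff y x).mpr h)
  · rintro ⟨hne, h⟩
    refine ⟨?_, ?_⟩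
    · intro hc
      exact hne (by rw [QuotientGroup.eq, vstab_eq]; exact hc)
    · rcases h with h | h
      · exact Or.inl ((rel_iff x y).mp h)
      · exact Or.inr ((rel_iff y x).mp h)

def myIso : myQ.underlyingGraph ≃g hammingGraph 2 2 where
  toEquiv := myEquiv
  map_rel_iff' := by
    intro a b
    induction a using QuotientGroup.induction_on with
    | _ x =>
      induction b using QuotientGroup.induction_on with
      | _ y =>
        show (hammingGraph 2 2).Adj (g x) (g y) ↔
          myQ.underlyingGraph.Adj (QuotientGroup.mk x) (QuotientGroup.mk y)
        exact adj_iff x y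

end Aux

/-- There is a nonorientable regular embedding of `H(2,2)` with dihedral automorphism group
of order 16, of type `{8,2}₈`. -/
theorem stmt5 :
    ∃ Q : MapQuad,
      Q.IsRegularEmbeddingOf (hammingGraph 2 2) ∧ Q.Nonorientable ∧
      Nonempty (Q.G ≃* DihedralGroup 8) ∧
      orderOf (Q.l * Q.r) = 8 ∧ orderOf (Q.r * Q.t) = 2 ∧ orderOf (Q.l * Q.r * Q.t) = 8 := by
    classical
  refine ⟨myQ, ⟨?_, ⟨myIso⟩, ?_⟩, ?_, ?_, ?_, ?_, ?_⟩
  · refine ⟨?_, by decide, by decide, by decide, by decide, by decide, ?_⟩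
    · apply top_of
      · have h1 : myQ.l ∈ Subgroup.closure ({myQ.l, myQ.r, myQ.t} : Set myQ.G) :=
          Subgroup.subset_closure (by left; rfl)
        have h2 : myQ.r ∈ Subgroup.closure ({myQ.l, myQ.r, myQ.t} : Set myQ.G) :=
          Subgroup.subset_closure (by right; left; rfl)
        exact (show (DihedralGroup.r 1 : D) = myQ.l * myQ.r by decide) ▸ mul_mem h1 h2
      · exact Subgroup.subset_closure (by left; rfl)
    · rw [h4_eq, Nat.card_eq_fintype_card]
      decide
  · rw [Nat.card_eq_fintype_card, Nat.card_eq_fintype_card]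
    decide
  · rw [MapQuad.Nonorientable]
    have h1 : myQ.l * myQ.t ∈
        Subgroup.closure ({myQ.l * myQ.t, myQ.r * myQ.t} : Set myQ.G) :=
      Subgroup.subset_closure (by left; rfl)
    have h2 : myQ.r * myQ.t ∈
        Subgroup.closure ({myQ.l * myQ.t, myQ.r * myQ.t} : Set myQ.G) :=
      Subgroup.subset_closure (by right; rfl)
    have hr1 : DihedralGroup.r 1 ∈
        Subgroup.closure ({myQ.l * myQ.t, myQ.r * myQ.t} : Set myQ.G) :=
      (show (DihedralGroup.r 1 : D) = (myQ.l * myQ.t) * (myQ.r * myQ.t) by decide) ▸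
        mul_mem h1 h2
    apply top_of hr1
    have hr4 : DihedralGroup.r 4 ∈
        Subgroup.closure ({myQ.l * myQ.t, myQ.r * myQ.t} : Set myQ.G) :=
      (show (DihedralGroup.r 4 : D) = DihedralGroup.r 1 ^ 4 by decide) ▸ pow_mem hr1 4
    exact (show (DihedralGroup.sr 0 : D) = (myQ.l * myQ.t) * DihedralGroup.r 4 by decide) ▸
      mul_mem h1 hr4
  · exact ⟨MulEquiv.refl _⟩
  · rw [orderOf_eq_iff (by norm_num)]; decide
  · rw [orderOf_eq_iff (by norm_num)]; decide
  · rw [orderOf_eq_iff (by norm_num)]; decide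
end

section
/- Let i ∈ F₉ satisfy i² = −1, and let λ, ρ, τ be the images in PGL(2,9) of the matrices [[−1,1],[1,1]], [[0,1+i],[−1,0]], [[1,1],[1,−1]] over F₉. Then λ² = ρ² = τ² = (λτ)² = 1 with λτ ≠ 1, the elements λ, ρ, τ generate PGL(2,9), the orders of λρ, ρτ and λρτ are 10, 10 and 8 respectively, the subgroup ⟨λτ, ρτ⟩ equals PGL(2,9), and λ lies in the image of the natural map SL(2,F₉) → PGL(2,9). -/
open Matrix in
/-- The field with 9 elements. -/
noncomputable abbrev F9 : Type := GaloisField 3 2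

open Matrix in
/-- `PGL(2,9)`: the quotient of `GL(2,F₉)` by its center. -/
abbrev PGL29 : Type := GL (Fin 2) F9 ⧸ Subgroup.center (GL (Fin 2) F9)

open Matrix

section Helpers

lemma hF3 : (3 : F9) = 0 := by exact_mod_cast CharP.cast_eq_zero F9 3

lemma fin2_ext (a b c d a' b' c' d' : F9) (h1 : a = a') (h2 : b = b') (h3 : c = c')
    (h4 : d = d') : !![a,b;c,d] = !![a',b';c',d'] := by rw [h1, h2, h3, h4]

lemma smul_one_fin_two (e : F9) : e • (1 : Matrix (Fin 2) (Fin 2) F9) = !![e,0;0,e] := by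
  ext x y; fin_cases x <;> fin_cases y <;> simp [Matrix.one_apply]

lemma smul_fin_two (e a b c d : F9) :
    e • (!![a,b;c,d] : Matrix (Fin 2) (Fin 2) F9) = !![e*a,e*b;e*c,e*d] := by
  ext x y; fin_cases x <;> fin_cases y <;> simp

/-- upper transvection as a GL element -/
noncomputable def Tu (c : F9) : GL (Fin 2) F9 :=
  ⟨!![1, c; 0, 1], !![1, -c; 0, 1],
    by ext a b; fin_cases a <;> fin_cases b <;>
      simp [Matrix.mul_apply, Fin.sum_univ_two, Matrix.one_apply],
    by ext a b; fin_cases a <;> fin_cases b <;>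
      simp [Matrix.mul_apply, Fin.sum_univ_two, Matrix.one_apply]⟩

/-- lower transvection as a GL element -/
noncomputable def Tl (c : F9) : GL (Fin 2) F9 :=
  ⟨!![1, 0; c, 1], !![1, 0; -c, 1],
    by ext a b; fin_cases a <;> fin_cases b <;>
      simp [Matrix.mul_apply, Fin.sum_univ_two, Matrix.one_apply],
    by ext a b; fin_cases a <;> fin_cases b <;>
      simp [Matrix.mul_apply, Fin.sum_univ_two, Matrix.one_apply]⟩

@[simp] lemma Tu_val (c : F9) : (Tu c : Matrix (Fin 2) (Fin 2) F9) = !![1, c; 0, 1] := rfl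
@[simp] lemma Tl_val (c : F9) : (Tl c : Matrix (Fin 2) (Fin 2) F9) = !![1, 0; c, 1] := rfl

lemma Tu_mul (a b : F9) : Tu a * Tu b = Tu (a + b) := by
  ext : 1
  show (Tu a : Matrix (Fin 2) (Fin 2) F9) * (Tu b : Matrix (Fin 2) (Fin 2) F9) = _
  rw [Tu_val, Tu_val, Tu_val, Matrix.mul_fin_two]
  exact fin2_ext _ _ _ _ _ _ _ _ (by ring) (by ring) (by ring) (by ring)

lemma Tu_zero : Tu 0 = 1 := by
  ext : 1
  show (Tu 0 : Matrix (Fin 2) (Fin 2) F9) = 1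
  rw [Tu_val, Matrix.one_fin_two]

lemma Tu_pow (a : F9) : ∀ n : ℕ, Tu a ^ n = Tu ((n : F9) * a)
  | 0 => by simp [Tu_zero]
  | n+1 => by
      rw [pow_succ, Tu_pow a n, Tu_mul]
      exact congrArg Tu (by push_cast; ring)

lemma Tl_mul (a b : F9) : Tl a * Tl b = Tl (a + b) := by
  ext : 1
  show (Tl a : Matrix (Fin 2) (Fin 2) F9) * (Tl b : Matrix (Fin 2) (Fin 2) F9) = _
  rw [Tl_val, Tl_val, Tl_val, Matrix.mul_fin_two]
  exact fin2_ext _ _ _ _ _ _ _ _ (by ring) (by ring) (by ring) (by ring)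

lemma Tl_zero : Tl 0 = 1 := by
  ext : 1
  show (Tl 0 : Matrix (Fin 2) (Fin 2) F9) = 1
  rw [Tl_val, Matrix.one_fin_two]

lemma Tl_pow (a : F9) : ∀ n : ℕ, Tl a ^ n = Tl ((n : F9) * a)
  | 0 => by simp [Tl_zero]
  | n+1 => by
      rw [pow_succ, Tl_pow a n, Tl_mul]
      exact congrArg Tl (by push_cast; ring)

lemma mem_center_of_scalar (g : GL (Fin 2) F9) (e : F9)
    (hg : (g : Matrix (Fin 2) (Fin 2) F9) = e • 1) :
    g ∈ Subgroup.center (GL (Fin 2) F9) := by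
  rw [Subgroup.mem_center_iff]
  intro h
  ext : 1
  show (h : Matrix (Fin 2) (Fin 2) F9) * g = (g : Matrix (Fin 2) (Fin 2) F9) * h
  rw [hg, Matrix.mul_smul, Matrix.smul_mul, Matrix.mul_one, Matrix.one_mul]

lemma entries_of_mem_center (g : GL (Fin 2) F9)
    (hg : g ∈ Subgroup.center (GL (Fin 2) F9)) :
    (g : Matrix (Fin 2) (Fin 2) F9) 0 1 = 0 ∧ (g : Matrix (Fin 2) (Fin 2) F9) 1 0 = 0 ∧
      (g : Matrix (Fin 2) (Fin 2) F9) 0 0 = (g : Matrix (Fin 2) (Fin 2) F9) 1 1 := by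
  rw [Subgroup.mem_center_iff] at hg
  have h1 := congrArg Units.val (hg (Tu 1))
  have h2 := congrArg Units.val (hg (Tl 1))
  have e10 := congrFun (congrFun h1 0) 0
  have e01 := congrFun (congrFun h1 0) 1
  have f01 := congrFun (congrFun h2 1) 1
  simp [Units.val_mul, Matrix.mul_apply, Fin.sum_univ_two] at e10 e01 f01
  exact ⟨f01, e10, by linear_combination -e01⟩

lemma mk_eq_one_of_scalar (g : GL (Fin 2) F9) (e : F9)
    (hg : (g : Matrix (Fin 2) (Fin 2) F9) = e • 1) : (QuotientGroup.mk g : PGL29) = 1 := by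
  rw [QuotientGroup.eq_one_iff]
  exact mem_center_of_scalar g e hg

lemma mk_ne_one_01 (g : GL (Fin 2) F9) (h : (g : Matrix (Fin 2) (Fin 2) F9) 0 1 ≠ 0) :
    (QuotientGroup.mk g : PGL29) ≠ 1 := by
  intro hc
  rw [QuotientGroup.eq_one_iff] at hc
  exact h (entries_of_mem_center g hc).1

lemma mk_eq_mk_of_smul (g h : GL (Fin 2) F9) (e : F9)
    (hv : (g : Matrix (Fin 2) (Fin 2) F9) = e • (h : Matrix (Fin 2) (Fin 2) F9)) :
    (QuotientGroup.mk g : PGL29) = QuotientGroup.mk h := by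
  have h1 : (QuotientGroup.mk (g * h⁻¹) : PGL29) = 1 := by
    apply mk_eq_one_of_scalar _ e
    show (g : Matrix (Fin 2) (Fin 2) F9) * (h⁻¹ : GL (Fin 2) F9) = e • 1
    rw [hv, Matrix.smul_mul]
    congr 1
    exact h.mul_inv
  exact mul_inv_eq_one.mp (by rw [← QuotientGroup.mk_inv, ← QuotientGroup.mk_mul]; exact h1)

lemma mk_pow (g : GL (Fin 2) F9) (n : ℕ) :
    (QuotientGroup.mk g : PGL29) ^ n = QuotientGroup.mk (g ^ n) := by
  rw [← QuotientGroup.mk'_apply, ← map_pow, QuotientGroup.mk'_apply]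

lemma det_gl_ne (g : GL (Fin 2) F9) : ((g : Matrix (Fin 2) (Fin 2) F9)).det ≠ 0 := by
  have : IsUnit (g : Matrix (Fin 2) (Fin 2) F9) := ⟨g, rfl⟩
  exact ((Matrix.isUnit_iff_isUnit_det _).mp this).ne_zero

lemma exists_nm (i : F9) (hi : i ^ 2 = -1) (c : F9) : ∃ n m : ℕ, c = (n : F9) + (m : F9) * i := by
  classical
  have hF : Fintype F9 := Fintype.ofFinite _
  have hcard : Fintype.card F9 = 9 := by
    rw [Fintype.card_eq_nat_card]; exact GaloisField.card 3 2 (by norm_num)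
  set f : ZMod 3 × ZMod 3 → F9 :=
    fun p => algebraMap (ZMod 3) F9 p.1 + algebraMap (ZMod 3) F9 p.2 * i with hf
  have halg : Function.Injective (algebraMap (ZMod 3) F9) := RingHom.injective _
  have hinj : Function.Injective f := by
    rintro ⟨a, b⟩ ⟨a', b'⟩ h
    simp only [hf] at h
    have hbb : b = b' := by
      by_contra hne
      have hsub : algebraMap (ZMod 3) F9 (b - b') * i = algebraMap (ZMod 3) F9 (a' - a) := by
        rw [map_sub, map_sub]; ring_nf; linear_combination h
      have hbne : algebraMap (ZMod 3) F9 (b - b') ≠ 0 := by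
        intro h0
        exact hne (sub_eq_zero.mp (halg (by rw [h0, map_zero])))
      have hieq : i = algebraMap (ZMod 3) F9 ((a' - a) * (b - b')⁻¹) := by
        rw [_root_.map_mul, map_inv₀, eq_comm, mul_inv_eq_iff_eq_mul₀ hbne]
        linear_combination -hsub
      have h2 : ((a' - a) * (b - b')⁻¹) ^ 2 = -1 := by
        apply halg
        rw [map_pow, ← hieq, hi, map_neg, _root_.map_one]
      have hno : ∀ r : ZMod 3, r ^ 2 ≠ -1 := by decide
      exact absurd h2 (hno _)
    have haa : a = a' := by
      apply halg
      rw [hbb] at h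
      linear_combination h
    rw [haa, hbb]
  have hbij : Function.Bijective f := by
    rw [Fintype.bijective_iff_injective_and_card]
    exact ⟨hinj, by simp [hcard]⟩
  obtain ⟨⟨a, b⟩, hp⟩ := hbij.2 c
  refine ⟨a.val, b.val, ?_⟩
  rw [← hp]
  simp only [hf]
  have ha : (algebraMap (ZMod 3) F9) a = ((a.val : ℕ) : F9) := by
    conv_lhs => rw [← (ZMod.natCast_rightInverse a : ((a.val : ℕ) : ZMod 3) = a)]
    rw [map_natCast]
  have hb : (algebraMap (ZMod 3) F9) b = ((b.val : ℕ) : F9) := by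
    conv_lhs => rw [← (ZMod.natCast_rightInverse b : ((b.val : ℕ) : ZMod 3) = b)]
    rw [map_natCast]
  rw [ha, hb]

lemma gen_top (i : F9) (hi : i ^ 2 = -1) (H : Subgroup PGL29)
    (hU : ∀ c : F9, (QuotientGroup.mk (Tu c) : PGL29) ∈ H)
    (hL : ∀ c : F9, (QuotientGroup.mk (Tl c) : PGL29) ∈ H)
    (w : GL (Fin 2) F9) (hw : ((w : Matrix (Fin 2) (Fin 2) F9)).det ^ 4 = -1)
    (hwH : (QuotientGroup.mk w : PGL29) ∈ H) : H = ⊤ := by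
  have h3 : (3 : F9) = 0 := hF3
  have hT : ∀ t : Matrix.TransvectionStruct (Fin 2) F9, ∃ u : GL (Fin 2) F9,
      (u : Matrix (Fin 2) (Fin 2) F9) = t.toMatrix ∧ (QuotientGroup.mk u : PGL29) ∈ H := by
    rintro ⟨a, b, hab, c⟩
    fin_cases a <;> fin_cases b <;> simp only at hab
    · exact absurd rfl hab
    · refine ⟨Tu c, ?_, hU c⟩
      rw [Tu_val]
      ext x y
      fin_cases x <;> fin_cases y <;>
        simp [Matrix.TransvectionStruct.toMatrix_mk, Matrix.transvection,
          Matrix.single, Matrix.one_apply]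
    · refine ⟨Tl c, ?_, hL c⟩
      rw [Tl_val]
      ext x y
      fin_cases x <;> fin_cases y <;>
        simp [Matrix.TransvectionStruct.toMatrix_mk, Matrix.transvection,
          Matrix.single, Matrix.one_apply]
    · exact absurd rfl hab
  have hlist : ∀ L : List (Matrix.TransvectionStruct (Fin 2) F9), ∃ u : GL (Fin 2) F9,
      (u : Matrix (Fin 2) (Fin 2) F9) = (L.map Matrix.TransvectionStruct.toMatrix).prod ∧
        (QuotientGroup.mk u : PGL29) ∈ H := by
    intro L
    induction L with
    | nil => exact ⟨1, by simp, by rw [QuotientGroup.mk_one]; exact one_mem H⟩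
    | cons t L ih =>
      obtain ⟨u, hu, huH⟩ := ih
      obtain ⟨s, hs, hsH⟩ := hT t
      refine ⟨s * u, by simp [Units.val_mul, hu, hs], ?_⟩
      rw [QuotientGroup.mk_mul]; exact mul_mem hsH huH
  have hdiagH : ∀ d : F9, d ≠ 0 → ∃ u : GL (Fin 2) F9,
      (u : Matrix (Fin 2) (Fin 2) F9) = !![d, 0; 0, d⁻¹] ∧
        (QuotientGroup.mk u : PGL29) ∈ H := by
    intro d hd
    have hdd : d * d⁻¹ = 1 := mul_inv_cancel₀ hd
    have s1 : (!![1, d; 0, 1] : Matrix (Fin 2) (Fin 2) F9) * !![1, 0; -d⁻¹, 1]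
        = !![0, d; -d⁻¹, 1] := by
      rw [Matrix.mul_fin_two]
      exact fin2_ext _ _ _ _ _ _ _ _ (by linear_combination -hdd) (by ring) (by ring) (by ring)
    have s2 : (!![0, d; -d⁻¹, 1] : Matrix (Fin 2) (Fin 2) F9) * !![1, d; 0, 1]
        = !![0, d; -d⁻¹, 0] := by
      rw [Matrix.mul_fin_two]
      exact fin2_ext _ _ _ _ _ _ _ _ (by ring) (by ring) (by ring) (by linear_combination -hdd)
    have s3 : (!![1, -1; 0, 1] : Matrix (Fin 2) (Fin 2) F9) * !![1, 0; 1, 1]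
        = !![0, -1; 1, 1] := by
      rw [Matrix.mul_fin_two]
      exact fin2_ext _ _ _ _ _ _ _ _ (by ring) (by ring) (by ring) (by ring)
    have s4 : (!![0, -1; 1, 1] : Matrix (Fin 2) (Fin 2) F9) * !![1, -1; 0, 1]
        = !![0, -1; 1, 0] := by
      rw [Matrix.mul_fin_two]
      exact fin2_ext _ _ _ _ _ _ _ _ (by ring) (by ring) (by ring) (by ring)
    have s5 : (!![0, d; -d⁻¹, 0] : Matrix (Fin 2) (Fin 2) F9) * !![0, -1; 1, 0]
        = !![d, 0; 0, d⁻¹] := by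
      rw [Matrix.mul_fin_two]
      exact fin2_ext _ _ _ _ _ _ _ _ (by ring) (by ring) (by ring) (by ring)
    refine ⟨Tu d * Tl (-d⁻¹) * Tu d * (Tu (-1) * Tl 1 * Tu (-1)), ?_, ?_⟩
    · show ((Tu d : Matrix (Fin 2) (Fin 2) F9) * Tl (-d⁻¹) * Tu d *
        ((Tu (-1) : Matrix (Fin 2) (Fin 2) F9) * Tl 1 * Tu (-1))) = _
      simp only [Tu_val, Tl_val]
      rw [s1, s2, s3, s4, s5]
    · simp only [QuotientGroup.mk_mul]
      exact mul_mem (mul_mem (mul_mem (hU d) (hL _)) (hU d))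
        (mul_mem (mul_mem (hU _) (hL 1)) (hU _))
  have hSL : ∀ g : GL (Fin 2) F9, ((g : Matrix (Fin 2) (Fin 2) F9)).det = 1 →
      (QuotientGroup.mk g : PGL29) ∈ H := by
    intro g hg
    obtain ⟨L, L', D, hdec⟩ :=
      Matrix.Pivot.exists_list_transvec_mul_diagonal_mul_list_transvec
        (g : Matrix (Fin 2) (Fin 2) F9)
    obtain ⟨P, hP, hPH⟩ := hlist L
    obtain ⟨Q, hQ, hQH⟩ := hlist L'
    have hdetD : D 0 * D 1 = 1 := by
      have := hg
      rw [hdec] at this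
      simp only [Matrix.det_mul, Matrix.TransvectionStruct.det_toMatrix_prod,
        Matrix.det_diagonal, Fin.prod_univ_two, one_mul, mul_one] at this
      exact this
    have hD0 : D 0 ≠ 0 := by
      intro h0; rw [h0, zero_mul] at hdetD; exact zero_ne_one hdetD
    have hD1 : D 1 = (D 0)⁻¹ := eq_inv_of_mul_eq_one_right hdetD
    obtain ⟨Dg, hDg, hDgH⟩ := hdiagH (D 0) hD0
    have hgm : g = P * Dg * Q := by
      ext : 1
      show (g : Matrix (Fin 2) (Fin 2) F9) = ((P : Matrix (Fin 2) (Fin 2) F9) * Dg) * Q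
      rw [hP, hDg, hQ, hdec]
      congr 1
      congr 1
      ext x y
      fin_cases x <;> fin_cases y <;> simp [Matrix.diagonal, hD1]
    rw [hgm, QuotientGroup.mk_mul, QuotientGroup.mk_mul]
    exact mul_mem (mul_mem hPH hDgH) hQH
  have hsq : ∀ g : GL (Fin 2) F9, ((g : Matrix (Fin 2) (Fin 2) F9)).det ^ 4 = 1 →
      (QuotientGroup.mk g : PGL29) ∈ H := by
    intro g h4
    set c := ((g : Matrix (Fin 2) (Fin 2) F9)).det with hc
    have hcne : c ≠ 0 := det_gl_ne g
    have he : ∃ e : F9, e ^ 2 = c := by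
      have h2 : (c ^ 2 - 1) * (c ^ 2 + 1) = 0 := by linear_combination h4
      rcases mul_eq_zero.mp h2 with h | h
      · have : (c - 1) * (c + 1) = 0 := by linear_combination h
        rcases mul_eq_zero.mp this with h' | h'
        · exact ⟨1, by linear_combination -h'⟩
        · exact ⟨i, by linear_combination hi - h'⟩
      · have : (c - i) * (c + i) = 0 := by linear_combination h - hi
        rcases mul_eq_zero.mp this with h' | h'
        · exact ⟨1 - i, by linear_combination -h' - i * h3 + hi⟩
        · exact ⟨1 + i, by linear_combination -h' + i * h3 + hi⟩
    obtain ⟨e, he⟩ := he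
    have hene : e ≠ 0 := by
      intro h0; rw [h0] at he; exact hcne (by linear_combination -he)
    have hdet : ((e⁻¹ • 1 : Matrix (Fin 2) (Fin 2) F9)).det ≠ 0 := by
      rw [Matrix.det_smul, Matrix.det_one]
      simp [pow_eq_zero_iff, inv_eq_zero, hene]
    set sc : GL (Fin 2) F9 := Matrix.GeneralLinearGroup.mkOfDetNeZero _ hdet with hsc
    have hscval : (sc : Matrix (Fin 2) (Fin 2) F9) = e⁻¹ • 1 := rfl
    have hsc1 : (QuotientGroup.mk sc : PGL29) = 1 := by
      rw [QuotientGroup.eq_one_iff]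
      exact mem_center_of_scalar sc e⁻¹ hscval
    have hdet' : ((sc * g : GL (Fin 2) F9) : Matrix (Fin 2) (Fin 2) F9).det = 1 := by
      show ((sc : Matrix (Fin 2) (Fin 2) F9) * g).det = 1
      rw [Matrix.det_mul, hscval, Matrix.det_smul, Matrix.det_one, ← hc, Fintype.card_fin]
      field_simp
      linear_combination -he
    have := hSL _ hdet'
    rw [QuotientGroup.mk_mul, hsc1, one_mul] at this
    exact this
  have hall : ∀ g : GL (Fin 2) F9, (QuotientGroup.mk g : PGL29) ∈ H := by
    intro g
    set c := ((g : Matrix (Fin 2) (Fin 2) F9)).det with hc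
    have hcne : c ≠ 0 := det_gl_ne g
    have hF : Fintype F9 := Fintype.ofFinite _
    have hcard : Fintype.card F9 = 9 := by
      rw [Fintype.card_eq_nat_card]; exact GaloisField.card 3 2 (by norm_num)
    have h8 : c ^ 8 = 1 := by
      have := FiniteField.pow_card_sub_one_eq_one c hcne
      rwa [hcard] at this
    have h44 : (c ^ 4 - 1) * (c ^ 4 + 1) = 0 := by linear_combination h8
    rcases mul_eq_zero.mp h44 with h | h
    · exact hsq g (by linear_combination h)
    · have hwinv : ((w⁻¹ : GL (Fin 2) F9) : Matrix (Fin 2) (Fin 2) F9).det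
          = (((w : Matrix (Fin 2) (Fin 2) F9)).det)⁻¹ := by
        apply eq_inv_of_mul_eq_one_right
        rw [← Matrix.det_mul]
        show ((w : Matrix (Fin 2) (Fin 2) F9) * (w⁻¹ : GL (Fin 2) F9)).det = 1
        rw [← Units.val_mul, mul_inv_cancel, Units.val_one, Matrix.det_one]
      have hwne : ((w : Matrix (Fin 2) (Fin 2) F9)).det ≠ 0 := det_gl_ne w
      have h4' : (((g * w⁻¹ : GL (Fin 2) F9) : Matrix (Fin 2) (Fin 2) F9)).det ^ 4 = 1 := by
        show (((g : Matrix (Fin 2) (Fin 2) F9) * (w⁻¹ : GL (Fin 2) F9))).det ^ 4 = 1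
        rw [Matrix.det_mul, mul_pow, hwinv, inv_pow, ← hc]
        rw [show c ^ 4 = -1 by linear_combination h, hw]
        simp
      have := hsq _ h4'
      have h5 : (QuotientGroup.mk (g * w⁻¹) : PGL29) * QuotientGroup.mk w ∈ H := mul_mem this hwH
      rwa [← QuotientGroup.mk_mul, inv_mul_cancel_right] at h5
  rw [Subgroup.eq_top_iff']
  intro x
  induction x using QuotientGroup.induction_on with
  | H g => exact hall g

end Helpers

set_option maxHeartbeats 2000000 in
/-- The images `λ, ρ, τ` in `PGL(2,9)` of the matrices `[[-1,1],[1,1]]`, `[[0,1+i],[-1,0]]`,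
`[[1,1],[1,-1]]` (where `i² = -1` in `F₉`) are involutions with `(λτ)² = 1`, `λτ ≠ 1`,
generating `PGL(2,9)`; the orders of `λρ`, `ρτ`, `λρτ` are `10, 10, 8`;
`⟨λτ, ρτ⟩ = PGL(2,9)`; and `λ` lies in the image of `SL(2,F₉)`. -/
theorem stmt9 (i : F9) (hi : i ^ 2 = -1)
    (Ml Mr Mt : Matrix.GeneralLinearGroup (Fin 2) F9)
    (hMl : (Ml : Matrix (Fin 2) (Fin 2) F9) = !![-1, 1; 1, 1])
    (hMr : (Mr : Matrix (Fin 2) (Fin 2) F9) = !![0, 1 + i; -1, 0])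
    (hMt : (Mt : Matrix (Fin 2) (Fin 2) F9) = !![1, 1; 1, -1]) :
    (QuotientGroup.mk Ml : PGL29) ^ 2 = 1 ∧
    (QuotientGroup.mk Mr : PGL29) ^ 2 = 1 ∧
    (QuotientGroup.mk Mt : PGL29) ^ 2 = 1 ∧
    ((QuotientGroup.mk Ml : PGL29) * QuotientGroup.mk Mt) ^ 2 = 1 ∧
    (QuotientGroup.mk Ml : PGL29) * QuotientGroup.mk Mt ≠ 1 ∧
    Subgroup.closure {(QuotientGroup.mk Ml : PGL29), QuotientGroup.mk Mr,
      QuotientGroup.mk Mt} = ⊤ ∧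
    orderOf ((QuotientGroup.mk Ml : PGL29) * QuotientGroup.mk Mr) = 10 ∧
    orderOf ((QuotientGroup.mk Mr : PGL29) * QuotientGroup.mk Mt) = 10 ∧
    orderOf ((QuotientGroup.mk Ml : PGL29) * QuotientGroup.mk Mr * QuotientGroup.mk Mt) = 8 ∧
    Subgroup.closure {(QuotientGroup.mk Ml : PGL29) * QuotientGroup.mk Mt,
      (QuotientGroup.mk Mr : PGL29) * QuotientGroup.mk Mt} = ⊤ ∧
    ∃ s : Matrix.SpecialLinearGroup (Fin 2) F9,
      (QuotientGroup.mk (Matrix.SpecialLinearGroup.toGL s) : PGL29)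
        = QuotientGroup.mk Ml := by
  have h3 : (3 : F9) = 0 := hF3
  have pml2 : (!![-1, 1; 1, 1] : Matrix (Fin 2) (Fin 2) F9) * !![-1, 1; 1, 1] = !![2, 0; 0, 2] := by
    rw [Matrix.mul_fin_two]
    exact fin2_ext _ _ _ _ _ _ _ _ (by ring)
      (by ring) (by ring) (by ring)
  have pmr2 : (!![0, 1 + i; -1, 0] : Matrix (Fin 2) (Fin 2) F9) * !![0, 1 + i; -1, 0] = !![2 + 2 * i, 0; 0, 2 + 2 * i] := by
    rw [Matrix.mul_fin_two]
    exact fin2_ext _ _ _ _ _ _ _ _ (by linear_combination (-1 - i : F9) * h3)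
      (by ring) (by ring) (by linear_combination (-1 - i : F9) * h3)
  have pmt2 : (!![1, 1; 1, -1] : Matrix (Fin 2) (Fin 2) F9) * !![1, 1; 1, -1] = !![2, 0; 0, 2] := by
    rw [Matrix.mul_fin_two]
    exact fin2_ext _ _ _ _ _ _ _ _ (by ring)
      (by ring) (by ring) (by ring)
  have pLT : (!![-1, 1; 1, 1] : Matrix (Fin 2) (Fin 2) F9) * !![1, 1; 1, -1] = !![0, 1; 2, 0] := by
    rw [Matrix.mul_fin_two]
    exact fin2_ext _ _ _ _ _ _ _ _ (by ring)
      (by linear_combination (-1 : F9) * h3) (by ring) (by ring)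
  have pLT2 : (!![0, 1; 2, 0] : Matrix (Fin 2) (Fin 2) F9) * !![0, 1; 2, 0] = !![2, 0; 0, 2] := by
    rw [Matrix.mul_fin_two]
    exact fin2_ext _ _ _ _ _ _ _ _ (by ring)
      (by ring) (by ring) (by ring)
  have pA : (!![-1, 1; 1, 1] : Matrix (Fin 2) (Fin 2) F9) * !![0, 1 + i; -1, 0] = !![2, 2 + 2 * i; 2, 1 + i] := by
    rw [Matrix.mul_fin_two]
    exact fin2_ext _ _ _ _ _ _ _ _ (by linear_combination (-1 : F9) * h3)
      (by linear_combination (-1 - i : F9) * h3) (by linear_combination (-1 : F9) * h3) (by ring)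
  have pA2 : (!![2, 2 + 2 * i; 2, 1 + i] : Matrix (Fin 2) (Fin 2) F9) * !![2, 2 + 2 * i; 2, 1 + i] = !![2 + i, 1 + 2 * i; 2 * i, 1] := by
    rw [Matrix.mul_fin_two]
    exact fin2_ext _ _ _ _ _ _ _ _ (by linear_combination (2 + i : F9) * h3)
      (by linear_combination (2 : F9) * hi + (1 + 2 * i : F9) * h3) (by linear_combination (2 : F9) * h3) (by linear_combination (1 : F9) * hi + (1 + 2 * i : F9) * h3)
  have pA4 : (!![2 + i, 1 + 2 * i; 2 * i, 1] : Matrix (Fin 2) (Fin 2) F9) * !![2 + i, 1 + 2 * i; 2 * i, 1] = !![2, 1 + i; 1, 2 * i] := by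
    rw [Matrix.mul_fin_two]
    exact fin2_ext _ _ _ _ _ _ _ _ (by linear_combination (5 : F9) * hi + (-1 + 2 * i : F9) * h3)
      (by linear_combination (2 : F9) * hi + (2 * i : F9) * h3) (by linear_combination (2 : F9) * hi + (-1 + 2 * i : F9) * h3) (by linear_combination (4 : F9) * hi + (-1 : F9) * h3)
  have pA5 : (!![2, 1 + i; 1, 2 * i] : Matrix (Fin 2) (Fin 2) F9) * !![2, 2 + 2 * i; 2, 1 + i] = !![2 * i, 1; 2 + i, i] := by
    rw [Matrix.mul_fin_two]
    exact fin2_ext _ _ _ _ _ _ _ _ (by linear_combination (2 : F9) * h3)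
      (by linear_combination (1 : F9) * hi + (1 + 2 * i : F9) * h3) (by linear_combination (i : F9) * h3) (by linear_combination (2 : F9) * hi + (i : F9) * h3)
  have pA10 : (!![2 * i, 1; 2 + i, i] : Matrix (Fin 2) (Fin 2) F9) * !![2 * i, 1; 2 + i, i] = !![1 + i, 0; 0, 1 + i] := by
    rw [Matrix.mul_fin_two]
    exact fin2_ext _ _ _ _ _ _ _ _ (by linear_combination (4 : F9) * hi + (-1 : F9) * h3)
      (by linear_combination (i : F9) * h3) (by linear_combination (3 : F9) * hi + (-1 + 2 * i : F9) * h3) (by linear_combination (1 : F9) * hi)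
  have pB : (!![0, 1 + i; -1, 0] : Matrix (Fin 2) (Fin 2) F9) * !![1, 1; 1, -1] = !![1 + i, 2 + 2 * i; 2, 2] := by
    rw [Matrix.mul_fin_two]
    exact fin2_ext _ _ _ _ _ _ _ _ (by ring)
      (by linear_combination (-1 - i : F9) * h3) (by linear_combination (-1 : F9) * h3) (by linear_combination (-1 : F9) * h3)
  have pB2 : (!![1 + i, 2 + 2 * i; 2, 2] : Matrix (Fin 2) (Fin 2) F9) * !![1 + i, 2 + 2 * i; 2, 2] = !![1, 1 + 2 * i; 2 * i, 2 + i] := by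
    rw [Matrix.mul_fin_two]
    exact fin2_ext _ _ _ _ _ _ _ _ (by linear_combination (1 : F9) * hi + (1 + 2 * i : F9) * h3)
      (by linear_combination (2 : F9) * hi + (1 + 2 * i : F9) * h3) (by linear_combination (2 : F9) * h3) (by linear_combination (2 + i : F9) * h3)
  have pB3 : (!![1, 1 + 2 * i; 2 * i, 2 + i] : Matrix (Fin 2) (Fin 2) F9) * !![1 + i, 2 + 2 * i; 2, 2] = !![2 * i, 1; 2 + i, 0] := by
    rw [Matrix.mul_fin_two]
    exact fin2_ext _ _ _ _ _ _ _ _ (by linear_combination (1 + i : F9) * h3)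
      (by linear_combination (1 + 2 * i : F9) * h3) (by linear_combination (2 : F9) * hi + (i : F9) * h3) (by linear_combination (4 : F9) * hi + (2 * i : F9) * h3)
  have pB4 : (!![1, 1 + 2 * i; 2 * i, 2 + i] : Matrix (Fin 2) (Fin 2) F9) * !![1, 1 + 2 * i; 2 * i, 2 + i] = !![2 * i, 1 + i; 1, 2] := by
    rw [Matrix.mul_fin_two]
    exact fin2_ext _ _ _ _ _ _ _ _ (by linear_combination (4 : F9) * hi + (-1 : F9) * h3)
      (by linear_combination (2 : F9) * hi + (2 * i : F9) * h3) (by linear_combination (2 : F9) * hi + (-1 + 2 * i : F9) * h3) (by linear_combination (5 : F9) * hi + (-1 + 2 * i : F9) * h3)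
  have pB5 : (!![2 * i, 1 + i; 1, 2] : Matrix (Fin 2) (Fin 2) F9) * !![1 + i, 2 + 2 * i; 2, 2] = !![i, 1; 2 + i, 2 * i] := by
    rw [Matrix.mul_fin_two]
    exact fin2_ext _ _ _ _ _ _ _ _ (by linear_combination (2 : F9) * hi + (i : F9) * h3)
      (by linear_combination (4 : F9) * hi + (-1 + 2 * i : F9) * h3) (by linear_combination (1 : F9) * h3) (by linear_combination (2 : F9) * h3)
  have pB10 : (!![i, 1; 2 + i, 2 * i] : Matrix (Fin 2) (Fin 2) F9) * !![i, 1; 2 + i, 2 * i] = !![1 + i, 0; 0, 1 + i] := by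
    rw [Matrix.mul_fin_two]
    exact fin2_ext _ _ _ _ _ _ _ _ (by linear_combination (1 : F9) * hi)
      (by linear_combination (i : F9) * h3) (by linear_combination (3 : F9) * hi + (-1 + 2 * i : F9) * h3) (by linear_combination (4 : F9) * hi + (-1 : F9) * h3)
  have pC : (!![2, 2 + 2 * i; 2, 1 + i] : Matrix (Fin 2) (Fin 2) F9) * !![1, 1; 1, -1] = !![1 + 2 * i, i; i, 1 + 2 * i] := by
    rw [Matrix.mul_fin_two]
    exact fin2_ext _ _ _ _ _ _ _ _ (by linear_combination (1 : F9) * h3)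
      (by linear_combination (-i : F9) * h3) (by linear_combination (1 : F9) * h3) (by linear_combination (-i : F9) * h3)
  have pC2 : (!![1 + 2 * i, i; i, 1 + 2 * i] : Matrix (Fin 2) (Fin 2) F9) * !![1 + 2 * i, i; i, 1 + 2 * i] = !![2 + i, 2 + 2 * i; 2 + 2 * i, 2 + i] := by
    rw [Matrix.mul_fin_two]
    exact fin2_ext _ _ _ _ _ _ _ _ (by linear_combination (5 : F9) * hi + (-2 + i : F9) * h3)
      (by linear_combination (4 : F9) * hi + (-2 : F9) * h3) (by linear_combination (4 : F9) * hi + (-2 : F9) * h3) (by linear_combination (5 : F9) * hi + (-2 + i : F9) * h3)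
  have pC4 : (!![2 + i, 2 + 2 * i; 2 + 2 * i, 2 + i] : Matrix (Fin 2) (Fin 2) F9) * !![2 + i, 2 + 2 * i; 2 + 2 * i, 2 + i] = !![0, 1; 1, 0] := by
    rw [Matrix.mul_fin_two]
    exact fin2_ext _ _ _ _ _ _ _ _ (by linear_combination (5 : F9) * hi + (1 + 4 * i : F9) * h3)
      (by linear_combination (4 : F9) * hi + (1 + 4 * i : F9) * h3) (by linear_combination (4 : F9) * hi + (1 + 4 * i : F9) * h3) (by linear_combination (5 : F9) * hi + (1 + 4 * i : F9) * h3)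
  have pC8 : (!![0, 1; 1, 0] : Matrix (Fin 2) (Fin 2) F9) * !![0, 1; 1, 0] = !![1, 0; 0, 1] := by
    rw [Matrix.mul_fin_two]
    exact fin2_ext _ _ _ _ _ _ _ _ (by ring)
      (by ring) (by ring) (by ring)
  have sU10 : (!![1 + i, 2 + 2 * i; 2, 2] : Matrix (Fin 2) (Fin 2) F9) * !![1 + i, 2 + 2 * i; 2, 2] = !![1, 1 + 2 * i; 2 * i, 2 + i] := by
    rw [Matrix.mul_fin_two]
    exact fin2_ext _ _ _ _ _ _ _ _ (by linear_combination (1 : F9) * hi + (1 + 2 * i : F9) * h3)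
      (by linear_combination (2 : F9) * hi + (1 + 2 * i : F9) * h3) (by linear_combination (2 : F9) * h3) (by linear_combination (2 + i : F9) * h3)
  have sU11 : (!![1, 1 + 2 * i; 2 * i, 2 + i] : Matrix (Fin 2) (Fin 2) F9) * !![1 + i, 2 + 2 * i; 2, 2] = !![2 * i, 1; 2 + i, 0] := by
    rw [Matrix.mul_fin_two]
    exact fin2_ext _ _ _ _ _ _ _ _ (by linear_combination (1 + i : F9) * h3)
      (by linear_combination (1 + 2 * i : F9) * h3) (by linear_combination (2 : F9) * hi + (i : F9) * h3) (by linear_combination (4 : F9) * hi + (2 * i : F9) * h3)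
  have sU12 : (!![2 * i, 1; 2 + i, 0] : Matrix (Fin 2) (Fin 2) F9) * !![1 + i, 2 + 2 * i; 2, 2] = !![2 * i, 1 + i; 1, 2] := by
    rw [Matrix.mul_fin_two]
    exact fin2_ext _ _ _ _ _ _ _ _ (by linear_combination (2 : F9) * hi)
      (by linear_combination (4 : F9) * hi + (-1 + i : F9) * h3) (by linear_combination (1 : F9) * hi + (i : F9) * h3) (by linear_combination (2 : F9) * hi + (2 * i : F9) * h3)
  have sU13 : (!![2 * i, 1 + i; 1, 2] : Matrix (Fin 2) (Fin 2) F9) * !![0, 1; 2, 0] = !![2 + 2 * i, 2 * i; 1, 1] := by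
    rw [Matrix.mul_fin_two]
    exact fin2_ext _ _ _ _ _ _ _ _ (by ring)
      (by ring) (by linear_combination (1 : F9) * h3) (by ring)
  have sU14 : (!![2 + 2 * i, 2 * i; 1, 1] : Matrix (Fin 2) (Fin 2) F9) * !![1 + i, 2 + 2 * i; 2, 2] = !![2 * i, 0; i, 1 + 2 * i] := by
    rw [Matrix.mul_fin_two]
    exact fin2_ext _ _ _ _ _ _ _ _ (by linear_combination (2 : F9) * hi + (2 * i : F9) * h3)
      (by linear_combination (4 : F9) * hi + (4 * i : F9) * h3) (by linear_combination (1 : F9) * h3) (by linear_combination (1 : F9) * h3)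
  have sU15 : (!![2 * i, 0; i, 1 + 2 * i] : Matrix (Fin 2) (Fin 2) F9) * !![1 + i, 2 + 2 * i; 2, 2] = !![1 + 2 * i, 2 + i; 1 + 2 * i, 0] := by
    rw [Matrix.mul_fin_two]
    exact fin2_ext _ _ _ _ _ _ _ _ (by linear_combination (2 : F9) * hi + (-1 : F9) * h3)
      (by linear_combination (4 : F9) * hi + (-2 + i : F9) * h3) (by linear_combination (1 : F9) * hi + (i : F9) * h3) (by linear_combination (2 : F9) * hi + (2 * i : F9) * h3)
  have sU16 : (!![1 + 2 * i, 2 + i; 1 + 2 * i, 0] : Matrix (Fin 2) (Fin 2) F9) * !![0, 1; 2, 0] = !![1 + 2 * i, 1 + 2 * i; 0, 1 + 2 * i] := by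
    rw [Matrix.mul_fin_two]
    exact fin2_ext _ _ _ _ _ _ _ _ (by linear_combination (1 : F9) * h3)
      (by ring) (by ring) (by ring)
  have sUi0 : (!![0, 1; 2, 0] : Matrix (Fin 2) (Fin 2) F9) * !![1 + i, 2 + 2 * i; 2, 2] = !![2, 2; 2 + 2 * i, 1 + i] := by
    rw [Matrix.mul_fin_two]
    exact fin2_ext _ _ _ _ _ _ _ _ (by ring)
      (by ring) (by ring) (by linear_combination (1 + i : F9) * h3)
  have sUi1 : (!![2, 2; 2 + 2 * i, 1 + i] : Matrix (Fin 2) (Fin 2) F9) * !![0, 1; 2, 0] = !![1, 2; 2 + 2 * i, 2 + 2 * i] := by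
    rw [Matrix.mul_fin_two]
    exact fin2_ext _ _ _ _ _ _ _ _ (by linear_combination (1 : F9) * h3)
      (by ring) (by ring) (by ring)
  have sUi2 : (!![1, 2; 2 + 2 * i, 2 + 2 * i] : Matrix (Fin 2) (Fin 2) F9) * !![1 + i, 2 + 2 * i; 2, 2] = !![2 + i, 2 * i; 1 + 2 * i, 1] := by
    rw [Matrix.mul_fin_two]
    exact fin2_ext _ _ _ _ _ _ _ _ (by linear_combination (1 : F9) * h3)
      (by linear_combination (2 : F9) * h3) (by linear_combination (2 : F9) * hi + (1 + 2 * i : F9) * h3) (by linear_combination (4 : F9) * hi + (1 + 4 * i : F9) * h3)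
  have sUi3 : (!![2 + i, 2 * i; 1 + 2 * i, 1] : Matrix (Fin 2) (Fin 2) F9) * !![0, 1; 2, 0] = !![i, 2 + i; 2, 1 + 2 * i] := by
    rw [Matrix.mul_fin_two]
    exact fin2_ext _ _ _ _ _ _ _ _ (by linear_combination (i : F9) * h3)
      (by ring) (by ring) (by ring)
  have sUi4 : (!![i, 2 + i; 2, 1 + 2 * i] : Matrix (Fin 2) (Fin 2) F9) * !![1 + i, 2 + 2 * i; 2, 2] = !![0, 2 + i; 1, 2 * i] := by
    rw [Matrix.mul_fin_two]
    exact fin2_ext _ _ _ _ _ _ _ _ (by linear_combination (1 : F9) * hi + (1 + i : F9) * h3)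
      (by linear_combination (2 : F9) * hi + (i : F9) * h3) (by linear_combination (1 + 2 * i : F9) * h3) (by linear_combination (2 + 2 * i : F9) * h3)
  have sUi5 : (!![0, 2 + i; 1, 2 * i] : Matrix (Fin 2) (Fin 2) F9) * !![1 + i, 2 + 2 * i; 2, 2] = !![1 + 2 * i, 1 + 2 * i; 1 + 2 * i, 2] := by
    rw [Matrix.mul_fin_two]
    exact fin2_ext _ _ _ _ _ _ _ _ (by linear_combination (1 : F9) * h3)
      (by linear_combination (1 : F9) * h3) (by linear_combination (i : F9) * h3) (by linear_combination (2 * i : F9) * h3)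
  have sUi6 : (!![1 + 2 * i, 1 + 2 * i; 1 + 2 * i, 2] : Matrix (Fin 2) (Fin 2) F9) * !![1 + i, 2 + 2 * i; 2, 2] = !![1 + i, i; 0, 2] := by
    rw [Matrix.mul_fin_two]
    exact fin2_ext _ _ _ _ _ _ _ _ (by linear_combination (2 : F9) * hi + (2 * i : F9) * h3)
      (by linear_combination (4 : F9) * hi + (3 * i : F9) * h3) (by linear_combination (2 : F9) * hi + (1 + i : F9) * h3) (by linear_combination (4 : F9) * hi + (2 * i : F9) * h3)
  have sUi7 : (!![1 + i, i; 0, 2] : Matrix (Fin 2) (Fin 2) F9) * !![0, 1; 2, 0] = !![2 * i, 1 + i; 1, 0] := by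
    rw [Matrix.mul_fin_two]
    exact fin2_ext _ _ _ _ _ _ _ _ (by ring)
      (by ring) (by linear_combination (1 : F9) * h3) (by ring)
  have sUi8 : (!![2 * i, 1 + i; 1, 0] : Matrix (Fin 2) (Fin 2) F9) * !![1 + i, 2 + 2 * i; 2, 2] = !![i, 1; 1 + i, 2 + 2 * i] := by
    rw [Matrix.mul_fin_two]
    exact fin2_ext _ _ _ _ _ _ _ _ (by linear_combination (2 : F9) * hi + (i : F9) * h3)
      (by linear_combination (4 : F9) * hi + (-1 + 2 * i : F9) * h3) (by ring) (by ring)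
  have sUi9 : (!![i, 1; 1 + i, 2 + 2 * i] : Matrix (Fin 2) (Fin 2) F9) * !![1 + i, 2 + 2 * i; 2, 2] = !![1 + i, 2 * i; 1, 1 + 2 * i] := by
    rw [Matrix.mul_fin_two]
    exact fin2_ext _ _ _ _ _ _ _ _ (by linear_combination (1 : F9) * hi)
      (by linear_combination (2 : F9) * hi) (by linear_combination (1 : F9) * hi + (1 + 2 * i : F9) * h3) (by linear_combination (2 : F9) * hi + (1 + 2 * i : F9) * h3)
  have sUi10 : (!![1 + i, 2 * i; 1, 1 + 2 * i] : Matrix (Fin 2) (Fin 2) F9) * !![0, 1; 2, 0] = !![i, 1 + i; 2 + i, 1] := by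
    rw [Matrix.mul_fin_two]
    exact fin2_ext _ _ _ _ _ _ _ _ (by linear_combination (i : F9) * h3)
      (by ring) (by linear_combination (i : F9) * h3) (by ring)
  have sUi11 : (!![i, 1 + i; 2 + i, 1] : Matrix (Fin 2) (Fin 2) F9) * !![1 + i, 2 + 2 * i; 2, 2] = !![1, i; 0, 1] := by
    rw [Matrix.mul_fin_two]
    exact fin2_ext _ _ _ _ _ _ _ _ (by linear_combination (1 : F9) * hi + (i : F9) * h3)
      (by linear_combination (2 : F9) * hi + (i : F9) * h3) (by linear_combination (1 : F9) * hi + (1 + i : F9) * h3) (by linear_combination (2 : F9) * hi + (1 + 2 * i : F9) * h3)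
  have sL10 : (!![1 + i, 2 + 2 * i; 2, 2] : Matrix (Fin 2) (Fin 2) F9) * !![1 + i, 2 + 2 * i; 2, 2] = !![1, 1 + 2 * i; 2 * i, 2 + i] := by
    rw [Matrix.mul_fin_two]
    exact fin2_ext _ _ _ _ _ _ _ _ (by linear_combination (1 : F9) * hi + (1 + 2 * i : F9) * h3)
      (by linear_combination (2 : F9) * hi + (1 + 2 * i : F9) * h3) (by linear_combination (2 : F9) * h3) (by linear_combination (2 + i : F9) * h3)
  have sL11 : (!![1, 1 + 2 * i; 2 * i, 2 + i] : Matrix (Fin 2) (Fin 2) F9) * !![0, 1; 2, 0] = !![2 + i, 1; 1 + 2 * i, 2 * i] := by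
    rw [Matrix.mul_fin_two]
    exact fin2_ext _ _ _ _ _ _ _ _ (by linear_combination (i : F9) * h3)
      (by ring) (by linear_combination (1 : F9) * h3) (by ring)
  have sL12 : (!![2 + i, 1; 1 + 2 * i, 2 * i] : Matrix (Fin 2) (Fin 2) F9) * !![1 + i, 2 + 2 * i; 2, 2] = !![0, 1; 2 + i, 1 + i] := by
    rw [Matrix.mul_fin_two]
    exact fin2_ext _ _ _ _ _ _ _ _ (by linear_combination (1 : F9) * hi + (1 + i : F9) * h3)
      (by linear_combination (2 : F9) * hi + (1 + 2 * i : F9) * h3) (by linear_combination (2 : F9) * hi + (-1 + 2 * i : F9) * h3) (by linear_combination (4 : F9) * hi + (-1 + 3 * i : F9) * h3)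
  have sL13 : (!![0, 1; 2 + i, 1 + i] : Matrix (Fin 2) (Fin 2) F9) * !![1 + i, 2 + 2 * i; 2, 2] = !![2, 2; 2 * i, 1 + 2 * i] := by
    rw [Matrix.mul_fin_two]
    exact fin2_ext _ _ _ _ _ _ _ _ (by ring)
      (by ring) (by linear_combination (1 : F9) * hi + (1 + i : F9) * h3) (by linear_combination (2 : F9) * hi + (1 + 2 * i : F9) * h3)
  have sL14 : (!![2, 2; 2 * i, 1 + 2 * i] : Matrix (Fin 2) (Fin 2) F9) * !![1 + i, 2 + 2 * i; 2, 2] = !![2 * i, 2 + i; 0, 1 + 2 * i] := by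
    rw [Matrix.mul_fin_two]
    exact fin2_ext _ _ _ _ _ _ _ _ (by linear_combination (2 : F9) * h3)
      (by linear_combination (2 + i : F9) * h3) (by linear_combination (2 : F9) * hi + (2 * i : F9) * h3) (by linear_combination (4 : F9) * hi + (-1 + 2 * i : F9) * h3)
  have sL15 : (!![2 * i, 2 + i; 0, 1 + 2 * i] : Matrix (Fin 2) (Fin 2) F9) * !![1 + i, 2 + 2 * i; 2, 2] = !![2 + i, 0; 2 + i, 2 + i] := by
    rw [Matrix.mul_fin_two]
    exact fin2_ext _ _ _ _ _ _ _ _ (by linear_combination (2 : F9) * hi + (i : F9) * h3)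
      (by linear_combination (4 : F9) * hi + (2 * i : F9) * h3) (by linear_combination (i : F9) * h3) (by linear_combination (i : F9) * h3)
  have sLi0 : (!![0, 1; 2, 0] : Matrix (Fin 2) (Fin 2) F9) * !![1 + i, 2 + 2 * i; 2, 2] = !![2, 2; 2 + 2 * i, 1 + i] := by
    rw [Matrix.mul_fin_two]
    exact fin2_ext _ _ _ _ _ _ _ _ (by ring)
      (by ring) (by ring) (by linear_combination (1 + i : F9) * h3)
  have sLi1 : (!![2, 2; 2 + 2 * i, 1 + i] : Matrix (Fin 2) (Fin 2) F9) * !![1 + i, 2 + 2 * i; 2, 2] = !![2 * i, 2 + i; 2, 2 + i] := by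
    rw [Matrix.mul_fin_two]
    exact fin2_ext _ _ _ _ _ _ _ _ (by linear_combination (2 : F9) * h3)
      (by linear_combination (2 + i : F9) * h3) (by linear_combination (2 : F9) * hi + (2 * i : F9) * h3) (by linear_combination (4 : F9) * hi + (3 * i : F9) * h3)
  have sLi2 : (!![2 * i, 2 + i; 2, 2 + i] : Matrix (Fin 2) (Fin 2) F9) * !![0, 1; 2, 0] = !![1 + 2 * i, 2 * i; 1 + 2 * i, 2] := by
    rw [Matrix.mul_fin_two]
    exact fin2_ext _ _ _ _ _ _ _ _ (by linear_combination (1 : F9) * h3)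
      (by ring) (by linear_combination (1 : F9) * h3) (by ring)
  have sLi3 : (!![1 + 2 * i, 2 * i; 1 + 2 * i, 2] : Matrix (Fin 2) (Fin 2) F9) * !![1 + i, 2 + 2 * i; 2, 2] = !![2 + i, 1 + i; 0, 2] := by
    rw [Matrix.mul_fin_two]
    exact fin2_ext _ _ _ _ _ _ _ _ (by linear_combination (2 : F9) * hi + (-1 + 2 * i : F9) * h3)
      (by linear_combination (4 : F9) * hi + (-1 + 3 * i : F9) * h3) (by linear_combination (2 : F9) * hi + (1 + i : F9) * h3) (by linear_combination (4 : F9) * hi + (2 * i : F9) * h3)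
  have sLi4 : (!![2 + i, 1 + i; 0, 2] : Matrix (Fin 2) (Fin 2) F9) * !![0, 1; 2, 0] = !![2 + 2 * i, 2 + i; 1, 0] := by
    rw [Matrix.mul_fin_two]
    exact fin2_ext _ _ _ _ _ _ _ _ (by ring)
      (by ring) (by linear_combination (1 : F9) * h3) (by ring)
  have sLi5 : (!![2 + 2 * i, 2 + i; 1, 0] : Matrix (Fin 2) (Fin 2) F9) * !![1 + i, 2 + 2 * i; 2, 2] = !![1, 1 + i; 1 + i, 2 + 2 * i] := by
    rw [Matrix.mul_fin_two]
    exact fin2_ext _ _ _ _ _ _ _ _ (by linear_combination (2 : F9) * hi + (1 + 2 * i : F9) * h3)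
      (by linear_combination (4 : F9) * hi + (1 + 3 * i : F9) * h3) (by ring) (by ring)
  have sLi6 : (!![1, 1 + i; 1 + i, 2 + 2 * i] : Matrix (Fin 2) (Fin 2) F9) * !![1 + i, 2 + 2 * i; 2, 2] = !![0, 1 + i; 1, 1 + 2 * i] := by
    rw [Matrix.mul_fin_two]
    exact fin2_ext _ _ _ _ _ _ _ _ (by linear_combination (1 + i : F9) * h3)
      (by linear_combination (1 + i : F9) * h3) (by linear_combination (1 : F9) * hi + (1 + 2 * i : F9) * h3) (by linear_combination (2 : F9) * hi + (1 + 2 * i : F9) * h3)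
  have sLi7 : (!![0, 1 + i; 1, 1 + 2 * i] : Matrix (Fin 2) (Fin 2) F9) * !![1 + i, 2 + 2 * i; 2, 2] = !![2 + 2 * i, 2 + 2 * i; 2 * i, 1] := by
    rw [Matrix.mul_fin_two]
    exact fin2_ext _ _ _ _ _ _ _ _ (by ring)
      (by ring) (by linear_combination (1 + i : F9) * h3) (by linear_combination (1 + 2 * i : F9) * h3)
  have sLi8 : (!![2 + 2 * i, 2 + 2 * i; 2 * i, 1] : Matrix (Fin 2) (Fin 2) F9) * !![1 + i, 2 + 2 * i; 2, 2] = !![1 + 2 * i, 1; 2 * i, 1 + i] := by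
    rw [Matrix.mul_fin_two]
    exact fin2_ext _ _ _ _ _ _ _ _ (by linear_combination (2 : F9) * hi + (1 + 2 * i : F9) * h3)
      (by linear_combination (4 : F9) * hi + (1 + 4 * i : F9) * h3) (by linear_combination (2 : F9) * hi) (by linear_combination (4 : F9) * hi + (-1 + i : F9) * h3)
  have sLi9 : (!![1 + 2 * i, 1; 2 * i, 1 + i] : Matrix (Fin 2) (Fin 2) F9) * !![1 + i, 2 + 2 * i; 2, 2] = !![1, 0; i, 1] := by
    rw [Matrix.mul_fin_two]
    exact fin2_ext _ _ _ _ _ _ _ _ (by linear_combination (2 : F9) * hi + (i : F9) * h3)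
      (by linear_combination (4 : F9) * hi + (2 * i : F9) * h3) (by linear_combination (2 : F9) * hi + (i : F9) * h3) (by linear_combination (4 : F9) * hi + (-1 + 2 * i : F9) * h3)

  -- value lemmas
  have hAval : ((Ml * Mr : GL (Fin 2) F9) : Matrix (Fin 2) (Fin 2) F9) = !![2, 2 + 2 * i; 2, 1 + i] := by
    rw [Units.val_mul, hMl, hMr, pA]
  have hBval : ((Mr * Mt : GL (Fin 2) F9) : Matrix (Fin 2) (Fin 2) F9) = !![1 + i, 2 + 2 * i; 2, 2] := by
    rw [Units.val_mul, hMr, hMt, pB]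
  have hCval : ((Ml * Mr * Mt : GL (Fin 2) F9) : Matrix (Fin 2) (Fin 2) F9) = !![1 + 2 * i, i; i, 1 + 2 * i] := by
    rw [Units.val_mul, Units.val_mul, hMl, hMr, hMt, pA, pC]
  have hLTval : ((Ml * Mt : GL (Fin 2) F9) : Matrix (Fin 2) (Fin 2) F9) = !![0, 1; 2, 0] := by
    rw [Units.val_mul, hMl, hMt, pLT]
  -- power chains
  have eA2 : (!![2, 2 + 2 * i; 2, 1 + i] : Matrix (Fin 2) (Fin 2) F9) ^ 2 = !![2 + i, 1 + 2 * i; 2 * i, 1] := by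
    rw [pow_two, pA2]
  have eA4 : (!![2, 2 + 2 * i; 2, 1 + i] : Matrix (Fin 2) (Fin 2) F9) ^ 4 = !![2, 1 + i; 1, 2 * i] := by
    rw [show (4:ℕ) = 2*2 from rfl, pow_mul, eA2, pow_two, pA4]
  have eA5 : (!![2, 2 + 2 * i; 2, 1 + i] : Matrix (Fin 2) (Fin 2) F9) ^ 5 = !![2 * i, 1; 2 + i, i] := by
    rw [show (5:ℕ) = 4+1 from rfl, pow_succ, eA4, pA5]
  have eA10 : (!![2, 2 + 2 * i; 2, 1 + i] : Matrix (Fin 2) (Fin 2) F9) ^ 10 = !![1 + i, 0; 0, 1 + i] := by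
    rw [show (10:ℕ) = 5*2 from rfl, pow_mul, eA5, pow_two, pA10]
  have eB2 : (!![1 + i, 2 + 2 * i; 2, 2] : Matrix (Fin 2) (Fin 2) F9) ^ 2 = !![1, 1 + 2 * i; 2 * i, 2 + i] := by
    rw [pow_two, pB2]
  have eB4 : (!![1 + i, 2 + 2 * i; 2, 2] : Matrix (Fin 2) (Fin 2) F9) ^ 4 = !![2 * i, 1 + i; 1, 2] := by
    rw [show (4:ℕ) = 2*2 from rfl, pow_mul, eB2, pow_two, pB4]
  have eB5 : (!![1 + i, 2 + 2 * i; 2, 2] : Matrix (Fin 2) (Fin 2) F9) ^ 5 = !![i, 1; 2 + i, 2 * i] := by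
    rw [show (5:ℕ) = 4+1 from rfl, pow_succ, eB4, pB5]
  have eB10 : (!![1 + i, 2 + 2 * i; 2, 2] : Matrix (Fin 2) (Fin 2) F9) ^ 10 = !![1 + i, 0; 0, 1 + i] := by
    rw [show (10:ℕ) = 5*2 from rfl, pow_mul, eB5, pow_two, pB10]
  have eC2 : (!![1 + 2 * i, i; i, 1 + 2 * i] : Matrix (Fin 2) (Fin 2) F9) ^ 2 = !![2 + i, 2 + 2 * i; 2 + 2 * i, 2 + i] := by
    rw [pow_two, pC2]
  have eC4 : (!![1 + 2 * i, i; i, 1 + 2 * i] : Matrix (Fin 2) (Fin 2) F9) ^ 4 = !![0, 1; 1, 0] := by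
    rw [show (4:ℕ) = 2*2 from rfl, pow_mul, eC2, pow_two, pC4]
  have eC8 : (!![1 + 2 * i, i; i, 1 + 2 * i] : Matrix (Fin 2) (Fin 2) F9) ^ 8 = !![1, 0; 0, 1] := by
    rw [show (8:ℕ) = 4*2 from rfl, pow_mul, eC4, pow_two, pC8]
  -- generation of the two-generator subgroup
  have hgen : Subgroup.closure {(QuotientGroup.mk Ml : PGL29) * QuotientGroup.mk Mt,
      (QuotientGroup.mk Mr : PGL29) * QuotientGroup.mk Mt} = ⊤ := by
    set HH := Subgroup.closure {(QuotientGroup.mk Ml : PGL29) * QuotientGroup.mk Mt,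
      (QuotientGroup.mk Mr : PGL29) * QuotientGroup.mk Mt} with hHH
    have hu0 : (QuotientGroup.mk (Ml * Mt) : PGL29) ∈ HH :=
      Subgroup.subset_closure (Set.mem_insert _ _)
    have hv0 : (QuotientGroup.mk (Mr * Mt) : PGL29) ∈ HH :=
      Subgroup.subset_closure (Set.mem_insert_of_mem _ rfl)
    have hWU1 : (QuotientGroup.mk (Tu (1)) : PGL29) ∈ HH := by
      have hval : (((Mr * Mt) * (Mr * Mt) * (Mr * Mt) * (Mr * Mt) * (Ml * Mt) * (Mr * Mt) * (Mr * Mt) * (Ml * Mt) : GL (Fin 2) F9) : Matrix (Fin 2) (Fin 2) F9)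
          = !![1 + 2 * i, 1 + 2 * i; 0, 1 + 2 * i] := by
        simp only [Units.val_mul, hMl, hMr, hMt]
        rw [pLT, pB, sU10, sU11, sU12, sU13, sU14, sU15, sU16]
      have heq : (QuotientGroup.mk ((Mr * Mt) * (Mr * Mt) * (Mr * Mt) * (Mr * Mt) * (Ml * Mt) * (Mr * Mt) * (Mr * Mt) * (Ml * Mt)) : PGL29) = QuotientGroup.mk (Tu (1)) := by
        apply mk_eq_mk_of_smul _ _ (1 + 2 * i : F9)
        rw [hval, Tu_val, smul_fin_two]
        exact fin2_ext _ _ _ _ _ _ _ _ (by ring)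
          (by ring) (by ring) (by ring)
      rw [← heq]
      simp only [QuotientGroup.mk_mul]
      exact mul_mem (mul_mem (mul_mem (mul_mem (mul_mem (mul_mem (mul_mem (hv0) hv0) hv0) hv0) hu0) hv0) hv0) hu0
    have hWUi : (QuotientGroup.mk (Tu (i)) : PGL29) ∈ HH := by
      have hval : (((Ml * Mt) * (Mr * Mt) * (Ml * Mt) * (Mr * Mt) * (Ml * Mt) * (Mr * Mt) * (Mr * Mt) * (Mr * Mt) * (Ml * Mt) * (Mr * Mt) * (Mr * Mt) * (Ml * Mt) * (Mr * Mt) : GL (Fin 2) F9) : Matrix (Fin 2) (Fin 2) F9)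
          = !![1, i; 0, 1] := by
        simp only [Units.val_mul, hMl, hMr, hMt]
        rw [pLT, pB, sUi0, sUi1, sUi2, sUi3, sUi4, sUi5, sUi6, sUi7, sUi8, sUi9, sUi10, sUi11]
      have heq : (QuotientGroup.mk ((Ml * Mt) * (Mr * Mt) * (Ml * Mt) * (Mr * Mt) * (Ml * Mt) * (Mr * Mt) * (Mr * Mt) * (Mr * Mt) * (Ml * Mt) * (Mr * Mt) * (Mr * Mt) * (Ml * Mt) * (Mr * Mt)) : PGL29) = QuotientGroup.mk (Tu (i)) := by
        apply mk_eq_mk_of_smul _ _ (1 : F9)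
        rw [hval, Tu_val, smul_fin_two]
        exact fin2_ext _ _ _ _ _ _ _ _ (by ring)
          (by ring) (by ring) (by ring)
      rw [← heq]
      simp only [QuotientGroup.mk_mul]
      exact mul_mem (mul_mem (mul_mem (mul_mem (mul_mem (mul_mem (mul_mem (mul_mem (mul_mem (mul_mem (mul_mem (mul_mem (hu0) hv0) hu0) hv0) hu0) hv0) hv0) hv0) hu0) hv0) hv0) hu0) hv0
    have hWL1 : (QuotientGroup.mk (Tl (1)) : PGL29) ∈ HH := by
      have hval : (((Mr * Mt) * (Mr * Mt) * (Ml * Mt) * (Mr * Mt) * (Mr * Mt) * (Mr * Mt) * (Mr * Mt) : GL (Fin 2) F9) : Matrix (Fin 2) (Fin 2) F9)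
          = !![2 + i, 0; 2 + i, 2 + i] := by
        simp only [Units.val_mul, hMl, hMr, hMt]
        rw [pLT, pB, sL10, sL11, sL12, sL13, sL14, sL15]
      have heq : (QuotientGroup.mk ((Mr * Mt) * (Mr * Mt) * (Ml * Mt) * (Mr * Mt) * (Mr * Mt) * (Mr * Mt) * (Mr * Mt)) : PGL29) = QuotientGroup.mk (Tl (1)) := by
        apply mk_eq_mk_of_smul _ _ (2 + i : F9)
        rw [hval, Tl_val, smul_fin_two]
        exact fin2_ext _ _ _ _ _ _ _ _ (by ring)
          (by ring) (by ring) (by ring)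
      rw [← heq]
      simp only [QuotientGroup.mk_mul]
      exact mul_mem (mul_mem (mul_mem (mul_mem (mul_mem (mul_mem (hv0) hv0) hu0) hv0) hv0) hv0) hv0
    have hWLi : (QuotientGroup.mk (Tl (i)) : PGL29) ∈ HH := by
      have hval : (((Ml * Mt) * (Mr * Mt) * (Mr * Mt) * (Ml * Mt) * (Mr * Mt) * (Ml * Mt) * (Mr * Mt) * (Mr * Mt) * (Mr * Mt) * (Mr * Mt) * (Mr * Mt) : GL (Fin 2) F9) : Matrix (Fin 2) (Fin 2) F9)
          = !![1, 0; i, 1] := by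
        simp only [Units.val_mul, hMl, hMr, hMt]
        rw [pLT, pB, sLi0, sLi1, sLi2, sLi3, sLi4, sLi5, sLi6, sLi7, sLi8, sLi9]
      have heq : (QuotientGroup.mk ((Ml * Mt) * (Mr * Mt) * (Mr * Mt) * (Ml * Mt) * (Mr * Mt) * (Ml * Mt) * (Mr * Mt) * (Mr * Mt) * (Mr * Mt) * (Mr * Mt) * (Mr * Mt)) : PGL29) = QuotientGroup.mk (Tl (i)) := by
        apply mk_eq_mk_of_smul _ _ (1 : F9)
        rw [hval, Tl_val, smul_fin_two]
        exact fin2_ext _ _ _ _ _ _ _ _ (by ring)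
          (by ring) (by ring) (by ring)
      rw [← heq]
      simp only [QuotientGroup.mk_mul]
      exact mul_mem (mul_mem (mul_mem (mul_mem (mul_mem (mul_mem (mul_mem (mul_mem (mul_mem (mul_mem (hu0) hv0) hv0) hu0) hv0) hu0) hv0) hv0) hv0) hv0) hv0

    apply gen_top i hi
    · intro c
      obtain ⟨n, m, hc⟩ := exists_nm i hi c
      have hTuc : Tu c = Tu 1 ^ n * Tu i ^ m := by
        rw [Tu_pow, Tu_pow, Tu_mul, hc]
        exact congrArg Tu (by push_cast; ring)
      rw [hTuc, QuotientGroup.mk_mul, ← mk_pow, ← mk_pow]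
      exact mul_mem (pow_mem hWU1 n) (pow_mem hWUi m)
    · intro c
      obtain ⟨n, m, hc⟩ := exists_nm i hi c
      have hTlc : Tl c = Tl 1 ^ n * Tl i ^ m := by
        rw [Tl_pow, Tl_pow, Tl_mul, hc]
        exact congrArg Tl (by push_cast; ring)
      rw [hTlc, QuotientGroup.mk_mul, ← mk_pow, ← mk_pow]
      exact mul_mem (pow_mem hWL1 n) (pow_mem hWLi m)
    · show ((Mr * Mt : GL (Fin 2) F9) : Matrix (Fin 2) (Fin 2) F9).det ^ 4 = -1
      rw [hBval, Matrix.det_fin_two_of]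
      linear_combination (80 + 64 * i + 16 * i ^ 2 : F9) * hi + (-21 : F9) * h3
    · exact hv0
  refine ⟨?_, ?_, ?_, ?_, ?_, ?_, ?_, ?_, ?_, hgen, ?_⟩
  · -- lambda^2 = 1
    rw [show (QuotientGroup.mk Ml : PGL29) = QuotientGroup.mk Ml from rfl, mk_pow]
    apply mk_eq_one_of_scalar _ 2
    rw [Units.val_pow_eq_pow_val, hMl, pow_two, pml2, smul_one_fin_two]
  · rw [mk_pow]
    apply mk_eq_one_of_scalar _ (2 + 2 * i)
    rw [Units.val_pow_eq_pow_val, hMr, pow_two, pmr2, smul_one_fin_two]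
  · rw [mk_pow]
    apply mk_eq_one_of_scalar _ 2
    rw [Units.val_pow_eq_pow_val, hMt, pow_two, pmt2, smul_one_fin_two]
  · show (QuotientGroup.mk (Ml * Mt) : PGL29) ^ 2 = 1
    rw [mk_pow]
    apply mk_eq_one_of_scalar _ 2
    rw [Units.val_pow_eq_pow_val, hLTval, pow_two, pLT2, smul_one_fin_two]
  · show (QuotientGroup.mk (Ml * Mt) : PGL29) ≠ 1
    apply mk_ne_one_01
    rw [hLTval, show ((!![0, 1; 2, 0] : Matrix (Fin 2) (Fin 2) F9)) 0 1 = 1 from by simp]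
    intro hz
    exact (one_ne_zero : (1 : F9) ≠ 0) (by linear_combination (1 : F9) * hz)
  · -- closure of three
    have hle : Subgroup.closure {(QuotientGroup.mk Ml : PGL29) * QuotientGroup.mk Mt,
        (QuotientGroup.mk Mr : PGL29) * QuotientGroup.mk Mt} ≤
        Subgroup.closure {(QuotientGroup.mk Ml : PGL29), QuotientGroup.mk Mr,
          QuotientGroup.mk Mt} := by
      apply (Subgroup.closure_le _).mpr
      rintro x (rfl | rfl)
      · exact mul_mem (Subgroup.subset_closure (by simp))
          (Subgroup.subset_closure (by simp))
      · exact mul_mem (Subgroup.subset_closure (by simp))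
          (Subgroup.subset_closure (by simp))
    exact top_unique (hgen ▸ hle)
  · -- orderOf lambda rho = 10
    have h10 : ((QuotientGroup.mk Ml : PGL29) * QuotientGroup.mk Mr) ^ 10 = 1 := by
      show (QuotientGroup.mk (Ml * Mr) : PGL29) ^ 10 = 1
      rw [mk_pow]
      apply mk_eq_one_of_scalar _ (1 + i)
      rw [Units.val_pow_eq_pow_val, hAval, eA10, smul_one_fin_two]
    have h5 : ((QuotientGroup.mk Ml : PGL29) * QuotientGroup.mk Mr) ^ 5 ≠ 1 := by
      show (QuotientGroup.mk (Ml * Mr) : PGL29) ^ 5 ≠ 1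
      rw [mk_pow]
      apply mk_ne_one_01
      rw [Units.val_pow_eq_pow_val, hAval, eA5,
        show ((!![2 * i, 1; 2 + i, i] : Matrix (Fin 2) (Fin 2) F9)) 0 1 = 1 from by simp]
      intro hz
      exact (one_ne_zero : (1 : F9) ≠ 0) (by linear_combination (1 : F9) * hz)
    have h2 : ((QuotientGroup.mk Ml : PGL29) * QuotientGroup.mk Mr) ^ 2 ≠ 1 := by
      show (QuotientGroup.mk (Ml * Mr) : PGL29) ^ 2 ≠ 1
      rw [mk_pow]
      apply mk_ne_one_01
      rw [Units.val_pow_eq_pow_val, hAval, eA2,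
        show ((!![2 + i, 1 + 2 * i; 2 * i, 1] : Matrix (Fin 2) (Fin 2) F9)) 0 1 = 1 + 2 * i from by simp]
      intro hz
      exact (one_ne_zero : (1 : F9) ≠ 0)
        (by linear_combination (2 + 2 * i : F9) * hz + (-4 : F9) * hi + (1 - 2 * i : F9) * h3)
    apply orderOf_eq_of_pow_and_pow_div_prime (by norm_num) h10
    intro p pp pd
    have hp10 : p ∈ Nat.divisors 10 := Nat.mem_divisors.mpr ⟨pd, by norm_num⟩
    fin_cases hp10
    · exact absurd pp (by norm_num)
    · simpa using h5
    · simpa using h2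
    · exact absurd pp (by norm_num)
  · -- orderOf rho tau = 10
    have h10 : ((QuotientGroup.mk Mr : PGL29) * QuotientGroup.mk Mt) ^ 10 = 1 := by
      show (QuotientGroup.mk (Mr * Mt) : PGL29) ^ 10 = 1
      rw [mk_pow]
      apply mk_eq_one_of_scalar _ (1 + i)
      rw [Units.val_pow_eq_pow_val, hBval, eB10, smul_one_fin_two]
    have h5 : ((QuotientGroup.mk Mr : PGL29) * QuotientGroup.mk Mt) ^ 5 ≠ 1 := by
      show (QuotientGroup.mk (Mr * Mt) : PGL29) ^ 5 ≠ 1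
      rw [mk_pow]
      apply mk_ne_one_01
      rw [Units.val_pow_eq_pow_val, hBval, eB5,
        show ((!![i, 1; 2 + i, 2 * i] : Matrix (Fin 2) (Fin 2) F9)) 0 1 = 1 from by simp]
      intro hz
      exact (one_ne_zero : (1 : F9) ≠ 0) (by linear_combination (1 : F9) * hz)
    have h2 : ((QuotientGroup.mk Mr : PGL29) * QuotientGroup.mk Mt) ^ 2 ≠ 1 := by
      show (QuotientGroup.mk (Mr * Mt) : PGL29) ^ 2 ≠ 1
      rw [mk_pow]
      apply mk_ne_one_01
      rw [Units.val_pow_eq_pow_val, hBval, eB2,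
        show ((!![1, 1 + 2 * i; 2 * i, 2 + i] : Matrix (Fin 2) (Fin 2) F9)) 0 1 = 1 + 2 * i from by simp]
      intro hz
      exact (one_ne_zero : (1 : F9) ≠ 0)
        (by linear_combination (2 + 2 * i : F9) * hz + (-4 : F9) * hi + (1 - 2 * i : F9) * h3)
    apply orderOf_eq_of_pow_and_pow_div_prime (by norm_num) h10
    intro p pp pd
    have hp10 : p ∈ Nat.divisors 10 := Nat.mem_divisors.mpr ⟨pd, by norm_num⟩
    fin_cases hp10
    · exact absurd pp (by norm_num)
    · simpa using h5
    · simpa using h2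
    · exact absurd pp (by norm_num)
  · -- orderOf lambda rho tau = 8
    have h8 : ((QuotientGroup.mk Ml : PGL29) * QuotientGroup.mk Mr * QuotientGroup.mk Mt) ^ 8 = 1 := by
      show (QuotientGroup.mk (Ml * Mr * Mt) : PGL29) ^ 8 = 1
      rw [mk_pow]
      apply mk_eq_one_of_scalar _ 1
      rw [Units.val_pow_eq_pow_val, hCval, eC8, smul_one_fin_two]
    have h4 : ((QuotientGroup.mk Ml : PGL29) * QuotientGroup.mk Mr * QuotientGroup.mk Mt) ^ 4 ≠ 1 := by
      show (QuotientGroup.mk (Ml * Mr * Mt) : PGL29) ^ 4 ≠ 1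
      rw [mk_pow]
      apply mk_ne_one_01
      rw [Units.val_pow_eq_pow_val, hCval, eC4,
        show ((!![0, 1; 1, 0] : Matrix (Fin 2) (Fin 2) F9)) 0 1 = 1 from by simp]
      intro hz
      exact (one_ne_zero : (1 : F9) ≠ 0) (by linear_combination (1 : F9) * hz)
    apply orderOf_eq_of_pow_and_pow_div_prime (by norm_num) h8
    intro p pp pd
    have hp8 : p ∈ Nat.divisors 8 := Nat.mem_divisors.mpr ⟨pd, by norm_num⟩
    fin_cases hp8
    · exact absurd pp (by norm_num)
    · simpa using h4
    · exact absurd pp (by norm_num)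
    · exact absurd pp (by norm_num)
  · -- SL element
    refine ⟨⟨!![-1, 1; 1, 1], ?_⟩, ?_⟩
    · rw [Matrix.det_fin_two_of]
      linear_combination -h3
    · have hval : ((Matrix.SpecialLinearGroup.toGL
          (⟨!![-1, 1; 1, 1], by rw [Matrix.det_fin_two_of]; linear_combination -h3⟩ :
            Matrix.SpecialLinearGroup (Fin 2) F9)) : Matrix (Fin 2) (Fin 2) F9)
          = !![-1, 1; 1, 1] := rfl
      exact congrArg QuotientGroup.mk (by ext : 1; rw [hval, hMl])
end

section
/- Let γ = (1 2 3 4 5) be the 5-cycle in the symmetric group S_6 on {0,1,2,3,4,5} fixing 0, and let σ ∈ S_6 be an even involution (i.e., a product of two disjoint transpositions) with σ(0) = 1. Then the subgroup ⟨γ, σ⟩ of S_6 is isomorphic to the alternating group A_5 if and only if σ = (0 1)(2 5) or σ = (0 1)(3 4). -/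
set_option maxRecDepth 100000

namespace Stmt19Aux

open Equiv Equiv.Perm Subgroup

/-- The pentad of five synthemes stabilized by the exotic `A₅`. -/
def t : Fin 5 → Perm (Fin 6) :=
  ![swap 0 1 * swap 2 5 * swap 3 4,
    swap 0 2 * swap 1 3 * swap 4 5,
    swap 0 3 * swap 1 5 * swap 2 4,
    swap 0 4 * swap 1 2 * swap 3 5,
    swap 0 5 * swap 1 4 * swap 2 3]

lemma t_inj : Function.Injective t := by decide

/-- The subgroup of `S₆` that permutes the pentad by conjugation. -/
def N : Subgroup (Perm (Fin 6)) where
  carrier := {g | ∃ p : Perm (Fin 5), ∀ i, g * t i * g⁻¹ = t (p i)}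
  one_mem' := ⟨1, fun i => by simp⟩
  mul_mem' := by
    rintro g h ⟨p, hp⟩ ⟨q, hq⟩
    refine ⟨p * q, fun i => ?_⟩
    have : g * (h * t i * h⁻¹) * g⁻¹ = t (p (q i)) := by rw [hq i]; exact hp (q i)
    simpa [mul_assoc] using this
  inv_mem' := by
    rintro g ⟨p, hp⟩
    refine ⟨p⁻¹, fun i => ?_⟩
    have h := hp (p⁻¹ i)
    rw [show p (p⁻¹ i) = i from p.apply_symm_apply i] at h
    rw [← h]
    group

lemma uniq {g : Perm (Fin 6)} {p q : Perm (Fin 5)}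
    (hp : ∀ i, g * t i * g⁻¹ = t (p i)) (hq : ∀ i, g * t i * g⁻¹ = t (q i)) : p = q :=
  Equiv.ext fun i => t_inj ((hp i).symm.trans (hq i))

/-- The action of `N` on the pentad, as a homomorphism to `S₅`. -/
noncomputable def φ : N →* Perm (Fin 5) where
  toFun g := Classical.choose g.2
  map_one' := uniq (Classical.choose_spec (1 : N).2) (fun i => by simp)
  map_mul' g h := by
    refine uniq (Classical.choose_spec (g * h).2) (fun i => ?_)
    have hg := Classical.choose_spec g.2
    have hh := Classical.choose_spec h.2
    show (g : Perm (Fin 6)) * (h : Perm (Fin 6)) * t i * ((g : Perm (Fin 6)) * h)⁻¹ = _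
    have : (g : Perm (Fin 6)) * ((h : Perm (Fin 6)) * t i * (h : Perm (Fin 6))⁻¹) *
        (g : Perm (Fin 6))⁻¹ = t (Classical.choose g.2 (Classical.choose h.2 i)) := by
      rw [hh i]; exact hg _
    simpa [mul_assoc] using this

lemma φ_spec (g : N) (i : Fin 5) : (g : Perm (Fin 6)) * t i * (g : Perm (Fin 6))⁻¹ = t (φ g i) :=
  Classical.choose_spec g.2 i

lemma φ_eq (g : N) (p : Perm (Fin 5)) (h : ∀ i, (g : Perm (Fin 6)) * t i * (g : Perm (Fin 6))⁻¹ = t (p i)) :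
    φ g = p :=
  uniq (φ_spec g) h

lemma cent : ∀ g : Perm (Fin 6), g * t 0 = t 0 * g → g * t 1 = t 1 * g → g * t 2 = t 2 * g →
    g * t 3 = t 3 * g → g * t 4 = t 4 * g → g = 1 := by decide

lemma φ_inj : Function.Injective φ := by
  rw [injective_iff_map_eq_one]
  intro g hg
  have h : ∀ i, (g : Perm (Fin 6)) * t i = t i * (g : Perm (Fin 6)) := by
    intro i
    have := φ_spec g i
    rw [hg] at this
    simp only [Perm.one_apply] at this
    calc (g : Perm (Fin 6)) * t i = (g : Perm (Fin 6)) * t i * (g : Perm (Fin 6))⁻¹ *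
        (g : Perm (Fin 6)) := by group
    _ = t i * (g : Perm (Fin 6)) := by rw [this]
  have : (g : Perm (Fin 6)) = 1 := cent _ (h 0) (h 1) (h 2) (h 3) (h 4)
  exact Subtype.ext this

lemma hγt : ∀ i : Fin 5, (c[1, 2, 3, 4, 5] : Perm (Fin 6)) * t i * (c[1, 2, 3, 4, 5] : Perm (Fin 6))⁻¹
    = t ((c[0, 1, 2, 3, 4] : Perm (Fin 5)) i) := by decide

/-- The key construction: if `σ` permutes the pentad via `p`, and `γ₅, p` generate `A₅`,
then `⟨γ, σ⟩ ≅ A₅`. -/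
lemma good (σ : Perm (Fin 6)) (p : Perm (Fin 5))
    (hσt : ∀ i, σ * t i * σ⁻¹ = t (p i))
    (hgen : Subgroup.closure ({(c[0, 1, 2, 3, 4] : Perm (Fin 5)), p} : Set (Perm (Fin 5)))
      = alternatingGroup (Fin 5)) :
    Nonempty ((Subgroup.closure {(c[1, 2, 3, 4, 5] : Equiv.Perm (Fin 6)), σ} :
        Subgroup (Equiv.Perm (Fin 6))) ≃* alternatingGroup (Fin 5)) := by
  set γ6 : Perm (Fin 6) := c[1, 2, 3, 4, 5] with hγ6
  set K : Subgroup (Perm (Fin 6)) := Subgroup.closure {γ6, σ} with hK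
  have hγK : γ6 ∈ K := subset_closure (Set.mem_insert _ _)
  have hσK : σ ∈ K := subset_closure (Set.mem_insert_of_mem _ rfl)
  have hKN : K ≤ N := by
    rw [hK, closure_le]
    rintro x (rfl | rfl)
    · exact ⟨c[0, 1, 2, 3, 4], hγt⟩
    · exact ⟨p, hσt⟩
  set ψ : K →* Perm (Fin 5) := φ.comp (Subgroup.inclusion hKN) with hψ
  have hψval : ∀ (x : K) (q : Perm (Fin 5)),
      (∀ i, (x : Perm (Fin 6)) * t i * (x : Perm (Fin 6))⁻¹ = t (q i)) → ψ x = q := by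
    intro x q hx
    exact φ_eq (Subgroup.inclusion hKN x) q hx
  have hψγ : ψ ⟨γ6, hγK⟩ = c[0, 1, 2, 3, 4] := hψval _ _ hγt
  have hψσ : ψ ⟨σ, hσK⟩ = p := hψval _ _ hσt
  have hψinj : Function.Injective ψ := φ_inj.comp (Subgroup.inclusion_injective hKN)
  have hγA : (c[0, 1, 2, 3, 4] : Perm (Fin 5)) ∈ alternatingGroup (Fin 5) := by
    rw [← hgen]; exact subset_closure (Set.mem_insert _ _)
  have hpA : p ∈ alternatingGroup (Fin 5) := by
    rw [← hgen]; exact subset_closure (Set.mem_insert_of_mem _ rfl)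
  have hmem : ∀ x : K, ψ x ∈ alternatingGroup (Fin 5) := by
    have hcomap : Subgroup.comap ψ (alternatingGroup (Fin 5)) = ⊤ := by
      rw [eq_top_iff, ← Subgroup.closure_closure_coe_preimage (k := {γ6, σ}), closure_le]
      rintro x hx
      rcases hx with hx | hx
      · have : x = ⟨γ6, hγK⟩ := Subtype.ext hx
        subst this
        simp only [SetLike.mem_coe, Subgroup.mem_comap, hψγ]
        exact hγA
      · have : x = ⟨σ, hσK⟩ := Subtype.ext hx
        subst this
        simp only [SetLike.mem_coe, Subgroup.mem_comap, hψσ]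
        exact hpA
    intro x
    have : x ∈ Subgroup.comap ψ (alternatingGroup (Fin 5)) := hcomap ▸ Subgroup.mem_top x
    exact this
  have hrange : ∀ y : Perm (Fin 5), y ∈ alternatingGroup (Fin 5) → ∃ x : K, ψ x = y := by
    intro y hy
    have : alternatingGroup (Fin 5) ≤ ψ.range := by
      rw [← hgen, closure_le]
      rintro x (rfl | rfl)
      · exact ⟨⟨γ6, hγK⟩, hψγ⟩
      · exact ⟨⟨σ, hσK⟩, hψσ⟩
    exact this hy
  set ψ' : K →* alternatingGroup (Fin 5) := ψ.codRestrict _ hmem with hψ'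
  have hbij : Function.Bijective ψ' := by
    constructor
    · intro x y h
      exact hψinj (congrArg Subtype.val h)
    · intro y
      obtain ⟨x, hx⟩ := hrange y y.2
      exact ⟨x, Subtype.ext hx⟩
  exact ⟨MulEquiv.ofBijective ψ' hbij⟩

lemma no4 : ∀ g : Perm (Fin 5), Perm.sign g = 1 → g ^ 4 = 1 → g ^ 2 = 1 := by decide

/-- If the closure contains an element of order 4, it is not isomorphic to `A₅`. -/
lemma bad (σ w : Perm (Fin 6))
    (hw : w ∈ (Subgroup.closure {(c[1, 2, 3, 4, 5] : Equiv.Perm (Fin 6)), σ} :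
        Subgroup (Equiv.Perm (Fin 6))))
    (h4 : w ^ 4 = 1) (h2 : w ^ 2 ≠ 1)
    (e : (Subgroup.closure {(c[1, 2, 3, 4, 5] : Equiv.Perm (Fin 6)), σ} :
        Subgroup (Equiv.Perm (Fin 6))) ≃* alternatingGroup (Fin 5)) : False := by
  set x : (Subgroup.closure {(c[1, 2, 3, 4, 5] : Equiv.Perm (Fin 6)), σ} :
      Subgroup (Equiv.Perm (Fin 6))) := ⟨w, hw⟩ with hx
  have hx4 : x ^ 4 = 1 := by
    apply Subtype.ext
    rw [SubmonoidClass.coe_pow]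
    exact h4
  have he4 : ((e x : alternatingGroup (Fin 5)) : Perm (Fin 5)) ^ 4 = 1 := by
    rw [← SubmonoidClass.coe_pow, ← map_pow, hx4, map_one, OneMemClass.coe_one]
  have hsgn : Perm.sign ((e x : alternatingGroup (Fin 5)) : Perm (Fin 5)) = 1 :=
    (e x).2
  have h2' := no4 _ hsgn he4
  have : (e x) ^ 2 = 1 := by
    apply Subtype.ext
    rw [SubmonoidClass.coe_pow]
    exact h2'
  rw [← map_pow] at this
  have : x ^ 2 = 1 := e.injective (by rw [this, map_one])
  apply h2
  have := congrArg Subtype.val this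
  rwa [SubmonoidClass.coe_pow] at this

lemma sigma_cases : ∀ g : Perm (Fin 6), g ^ 2 = 1 → g 0 = 1 → Perm.sign g = 1 →
    (g = swap 0 1 * swap 2 3 ∨ g = swap 0 1 * swap 2 4 ∨ g = swap 0 1 * swap 2 5 ∨
     g = swap 0 1 * swap 3 4 ∨ g = swap 0 1 * swap 3 5 ∨ g = swap 0 1 * swap 4 5) := by decide

lemma hσ1t : ∀ i : Fin 5, (swap 0 1 * swap 2 5 : Perm (Fin 6)) * t i * (swap 0 1 * swap 2 5 : Perm (Fin 6))⁻¹
    = t ((swap 1 2 * swap 3 4 : Perm (Fin 5)) i) := by decide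

lemma hσ2t : ∀ i : Fin 5, (swap 0 1 * swap 3 4 : Perm (Fin 6)) * t i * (swap 0 1 * swap 3 4 : Perm (Fin 6))⁻¹
    = t ((swap 1 3 * swap 2 4 : Perm (Fin 5)) i) := by decide

lemma threecyc_cases : ∀ τ : Perm (Fin 5), τ.support.card = 3 →
      (τ = c[2, 3, 4] ∨
      τ = c[2, 4, 3] ∨
      τ = c[1, 2, 3] ∨
      τ = c[1, 2, 4] ∨
      τ = c[1, 3, 2] ∨
      τ = c[1, 3, 4] ∨
      τ = c[1, 4, 2] ∨
      τ = c[1, 4, 3] ∨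
      τ = c[0, 1, 2] ∨
      τ = c[0, 1, 3] ∨
      τ = c[0, 1, 4] ∨
      τ = c[0, 2, 1] ∨
      τ = c[0, 2, 3] ∨
      τ = c[0, 2, 4] ∨
      τ = c[0, 3, 1] ∨
      τ = c[0, 3, 2] ∨
      τ = c[0, 3, 4] ∨
      τ = c[0, 4, 1] ∨
      τ = c[0, 4, 2] ∨
      τ = c[0, 4, 3]) := by decide

lemma gen1 : Subgroup.closure ({(c[0, 1, 2, 3, 4] : Perm (Fin 5)), swap 1 2 * swap 3 4} : Set (Perm (Fin 5))) = alternatingGroup (Fin 5) := by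
  apply le_antisymm
  · rw [Subgroup.closure_le]
    rintro x (rfl | rfl) <;> simp only [SetLike.mem_coe, mem_alternatingGroup] <;> decide
  · rw [← closure_three_cycles_eq_alternating, Subgroup.closure_le]
    intro τ hτ
    have ha : (c[0, 1, 2, 3, 4] : Perm (Fin 5)) ∈ Subgroup.closure ({(c[0, 1, 2, 3, 4] : Perm (Fin 5)), swap 1 2 * swap 3 4} : Set (Perm (Fin 5))) :=
      Subgroup.subset_closure (Set.mem_insert _ _)
    have hb : (swap 1 2 * swap 3 4 : Perm (Fin 5)) ∈ Subgroup.closure ({(c[0, 1, 2, 3, 4] : Perm (Fin 5)), swap 1 2 * swap 3 4} : Set (Perm (Fin 5))) :=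
      Subgroup.subset_closure (Set.mem_insert_of_mem _ rfl)
    simp only [SetLike.mem_coe]
    rcases threecyc_cases τ hτ.card_support with rfl|rfl|rfl|rfl|rfl|rfl|rfl|rfl|rfl|rfl|rfl|rfl|rfl|rfl|rfl|rfl|rfl|rfl|rfl|rfl
    · rw [show (c[2, 3, 4] : Perm (Fin 5)) = (swap 1 2 * swap 3 4)*c[0, 1, 2, 3, 4]*c[0, 1, 2, 3, 4]*c[0, 1, 2, 3, 4]*(swap 1 2 * swap 3 4)*c[0, 1, 2, 3, 4]*(swap 1 2 * swap 3 4) from by decide]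
      exact mul_mem (mul_mem (mul_mem (mul_mem (mul_mem (mul_mem (hb) ha) ha) ha) hb) ha) hb
    · rw [show (c[2, 4, 3] : Perm (Fin 5)) = c[0, 1, 2, 3, 4]*(swap 1 2 * swap 3 4)*c[0, 1, 2, 3, 4]*c[0, 1, 2, 3, 4]*c[0, 1, 2, 3, 4]*(swap 1 2 * swap 3 4) from by decide]
      exact mul_mem (mul_mem (mul_mem (mul_mem (mul_mem (ha) hb) ha) ha) ha) hb
    · rw [show (c[1, 2, 3] : Perm (Fin 5)) = (swap 1 2 * swap 3 4)*c[0, 1, 2, 3, 4]*(swap 1 2 * swap 3 4)*c[0, 1, 2, 3, 4]*c[0, 1, 2, 3, 4]*c[0, 1, 2, 3, 4]*(swap 1 2 * swap 3 4) from by decide]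
      exact mul_mem (mul_mem (mul_mem (mul_mem (mul_mem (mul_mem (hb) ha) hb) ha) ha) ha) hb
    · rw [show (c[1, 2, 4] : Perm (Fin 5)) = c[0, 1, 2, 3, 4]*c[0, 1, 2, 3, 4]*c[0, 1, 2, 3, 4]*(swap 1 2 * swap 3 4)*c[0, 1, 2, 3, 4]*(swap 1 2 * swap 3 4) from by decide]
      exact mul_mem (mul_mem (mul_mem (mul_mem (mul_mem (ha) ha) ha) hb) ha) hb
    · rw [show (c[1, 3, 2] : Perm (Fin 5)) = (swap 1 2 * swap 3 4)*c[0, 1, 2, 3, 4]*c[0, 1, 2, 3, 4]*c[0, 1, 2, 3, 4]*(swap 1 2 * swap 3 4)*c[0, 1, 2, 3, 4] from by decide]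
      exact mul_mem (mul_mem (mul_mem (mul_mem (mul_mem (hb) ha) ha) ha) hb) ha
    · rw [show (c[1, 3, 4] : Perm (Fin 5)) = (swap 1 2 * swap 3 4)*c[0, 1, 2, 3, 4]*(swap 1 2 * swap 3 4)*c[0, 1, 2, 3, 4]*c[0, 1, 2, 3, 4]*c[0, 1, 2, 3, 4] from by decide]
      exact mul_mem (mul_mem (mul_mem (mul_mem (mul_mem (hb) ha) hb) ha) ha) ha
    · rw [show (c[1, 4, 2] : Perm (Fin 5)) = c[0, 1, 2, 3, 4]*(swap 1 2 * swap 3 4)*c[0, 1, 2, 3, 4]*c[0, 1, 2, 3, 4]*c[0, 1, 2, 3, 4] from by decide]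
      exact mul_mem (mul_mem (mul_mem (mul_mem (ha) hb) ha) ha) ha
    · rw [show (c[1, 4, 3] : Perm (Fin 5)) = c[0, 1, 2, 3, 4]*c[0, 1, 2, 3, 4]*c[0, 1, 2, 3, 4]*(swap 1 2 * swap 3 4)*c[0, 1, 2, 3, 4] from by decide]
      exact mul_mem (mul_mem (mul_mem (mul_mem (ha) ha) ha) hb) ha
    · rw [show (c[0, 1, 2] : Perm (Fin 5)) = c[0, 1, 2, 3, 4]*c[0, 1, 2, 3, 4]*(swap 1 2 * swap 3 4)*c[0, 1, 2, 3, 4]*c[0, 1, 2, 3, 4]*c[0, 1, 2, 3, 4]*(swap 1 2 * swap 3 4) from by decide]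
      exact mul_mem (mul_mem (mul_mem (mul_mem (mul_mem (mul_mem (ha) ha) hb) ha) ha) ha) hb
    · rw [show (c[0, 1, 3] : Perm (Fin 5)) = c[0, 1, 2, 3, 4]*(swap 1 2 * swap 3 4) from by decide]
      exact mul_mem (ha) hb
    · rw [show (c[0, 1, 4] : Perm (Fin 5)) = c[0, 1, 2, 3, 4]*(swap 1 2 * swap 3 4)*c[0, 1, 2, 3, 4]*c[0, 1, 2, 3, 4]*c[0, 1, 2, 3, 4]*(swap 1 2 * swap 3 4)*c[0, 1, 2, 3, 4] from by decide]
      exact mul_mem (mul_mem (mul_mem (mul_mem (mul_mem (mul_mem (ha) hb) ha) ha) ha) hb) ha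
    · rw [show (c[0, 2, 1] : Perm (Fin 5)) = (swap 1 2 * swap 3 4)*c[0, 1, 2, 3, 4]*c[0, 1, 2, 3, 4]*(swap 1 2 * swap 3 4)*c[0, 1, 2, 3, 4]*c[0, 1, 2, 3, 4]*c[0, 1, 2, 3, 4] from by decide]
      exact mul_mem (mul_mem (mul_mem (mul_mem (mul_mem (mul_mem (hb) ha) ha) hb) ha) ha) ha
    · rw [show (c[0, 2, 3] : Perm (Fin 5)) = c[0, 1, 2, 3, 4]*c[0, 1, 2, 3, 4]*c[0, 1, 2, 3, 4]*(swap 1 2 * swap 3 4)*c[0, 1, 2, 3, 4]*c[0, 1, 2, 3, 4]*c[0, 1, 2, 3, 4] from by decide]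
      exact mul_mem (mul_mem (mul_mem (mul_mem (mul_mem (mul_mem (ha) ha) ha) hb) ha) ha) ha
    · rw [show (c[0, 2, 4] : Perm (Fin 5)) = (swap 1 2 * swap 3 4)*c[0, 1, 2, 3, 4] from by decide]
      exact mul_mem (hb) ha
    · rw [show (c[0, 3, 1] : Perm (Fin 5)) = c[0, 1, 2, 3, 4]*(swap 1 2 * swap 3 4)*c[0, 1, 2, 3, 4]*(swap 1 2 * swap 3 4) from by decide]
      exact mul_mem (mul_mem (mul_mem (ha) hb) ha) hb
    · rw [show (c[0, 3, 2] : Perm (Fin 5)) = c[0, 1, 2, 3, 4]*c[0, 1, 2, 3, 4]*(swap 1 2 * swap 3 4)*c[0, 1, 2, 3, 4]*c[0, 1, 2, 3, 4] from by decide]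
      exact mul_mem (mul_mem (mul_mem (mul_mem (ha) ha) hb) ha) ha
    · rw [show (c[0, 3, 4] : Perm (Fin 5)) = (swap 1 2 * swap 3 4)*c[0, 1, 2, 3, 4]*c[0, 1, 2, 3, 4]*c[0, 1, 2, 3, 4]*(swap 1 2 * swap 3 4)*c[0, 1, 2, 3, 4]*c[0, 1, 2, 3, 4] from by decide]
      exact mul_mem (mul_mem (mul_mem (mul_mem (mul_mem (mul_mem (hb) ha) ha) ha) hb) ha) ha
    · rw [show (c[0, 4, 1] : Perm (Fin 5)) = (swap 1 2 * swap 3 4)*c[0, 1, 2, 3, 4]*c[0, 1, 2, 3, 4]*(swap 1 2 * swap 3 4)*c[0, 1, 2, 3, 4]*c[0, 1, 2, 3, 4]*(swap 1 2 * swap 3 4) from by decide]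
      exact mul_mem (mul_mem (mul_mem (mul_mem (mul_mem (mul_mem (hb) ha) ha) hb) ha) ha) hb
    · rw [show (c[0, 4, 2] : Perm (Fin 5)) = (swap 1 2 * swap 3 4)*c[0, 1, 2, 3, 4]*(swap 1 2 * swap 3 4)*c[0, 1, 2, 3, 4] from by decide]
      exact mul_mem (mul_mem (mul_mem (hb) ha) hb) ha
    · rw [show (c[0, 4, 3] : Perm (Fin 5)) = c[0, 1, 2, 3, 4]*c[0, 1, 2, 3, 4]*c[0, 1, 2, 3, 4]*(swap 1 2 * swap 3 4)*c[0, 1, 2, 3, 4]*c[0, 1, 2, 3, 4]*(swap 1 2 * swap 3 4) from by decide]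
      exact mul_mem (mul_mem (mul_mem (mul_mem (mul_mem (mul_mem (ha) ha) ha) hb) ha) ha) hb

lemma gen2 : Subgroup.closure ({(c[0, 1, 2, 3, 4] : Perm (Fin 5)), swap 1 3 * swap 2 4} : Set (Perm (Fin 5))) = alternatingGroup (Fin 5) := by
  apply le_antisymm
  · rw [Subgroup.closure_le]
    rintro x (rfl | rfl) <;> simp only [SetLike.mem_coe, mem_alternatingGroup] <;> decide
  · rw [← closure_three_cycles_eq_alternating, Subgroup.closure_le]
    intro τ hτ
    have ha : (c[0, 1, 2, 3, 4] : Perm (Fin 5)) ∈ Subgroup.closure ({(c[0, 1, 2, 3, 4] : Perm (Fin 5)), swap 1 3 * swap 2 4} : Set (Perm (Fin 5))) :=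
      Subgroup.subset_closure (Set.mem_insert _ _)
    have hb : (swap 1 3 * swap 2 4 : Perm (Fin 5)) ∈ Subgroup.closure ({(c[0, 1, 2, 3, 4] : Perm (Fin 5)), swap 1 3 * swap 2 4} : Set (Perm (Fin 5))) :=
      Subgroup.subset_closure (Set.mem_insert_of_mem _ rfl)
    simp only [SetLike.mem_coe]
    rcases threecyc_cases τ hτ.card_support with rfl|rfl|rfl|rfl|rfl|rfl|rfl|rfl|rfl|rfl|rfl|rfl|rfl|rfl|rfl|rfl|rfl|rfl|rfl|rfl
    · rw [show (c[2, 3, 4] : Perm (Fin 5)) = c[0, 1, 2, 3, 4]*c[0, 1, 2, 3, 4]*(swap 1 3 * swap 2 4)*c[0, 1, 2, 3, 4] from by decide]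
      exact mul_mem (mul_mem (mul_mem (ha) ha) hb) ha
    · rw [show (c[2, 4, 3] : Perm (Fin 5)) = c[0, 1, 2, 3, 4]*(swap 1 3 * swap 2 4)*c[0, 1, 2, 3, 4]*c[0, 1, 2, 3, 4]*(swap 1 3 * swap 2 4) from by decide]
      exact mul_mem (mul_mem (mul_mem (mul_mem (ha) hb) ha) ha) hb
    · rw [show (c[1, 2, 3] : Perm (Fin 5)) = c[0, 1, 2, 3, 4]*(swap 1 3 * swap 2 4)*c[0, 1, 2, 3, 4]*c[0, 1, 2, 3, 4] from by decide]
      exact mul_mem (mul_mem (mul_mem (ha) hb) ha) ha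
    · rw [show (c[1, 2, 4] : Perm (Fin 5)) = (swap 1 3 * swap 2 4)*c[0, 1, 2, 3, 4]*c[0, 1, 2, 3, 4]*(swap 1 3 * swap 2 4)*c[0, 1, 2, 3, 4]*(swap 1 3 * swap 2 4) from by decide]
      exact mul_mem (mul_mem (mul_mem (mul_mem (mul_mem (hb) ha) ha) hb) ha) hb
    · rw [show (c[1, 3, 2] : Perm (Fin 5)) = (swap 1 3 * swap 2 4)*c[0, 1, 2, 3, 4]*c[0, 1, 2, 3, 4]*(swap 1 3 * swap 2 4)*c[0, 1, 2, 3, 4] from by decide]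
      exact mul_mem (mul_mem (mul_mem (mul_mem (hb) ha) ha) hb) ha
    · rw [show (c[1, 3, 4] : Perm (Fin 5)) = (swap 1 3 * swap 2 4)*c[0, 1, 2, 3, 4]*(swap 1 3 * swap 2 4)*c[0, 1, 2, 3, 4]*c[0, 1, 2, 3, 4]*(swap 1 3 * swap 2 4) from by decide]
      exact mul_mem (mul_mem (mul_mem (mul_mem (mul_mem (hb) ha) hb) ha) ha) hb
    · rw [show (c[1, 4, 2] : Perm (Fin 5)) = (swap 1 3 * swap 2 4)*c[0, 1, 2, 3, 4]*(swap 1 3 * swap 2 4)*c[0, 1, 2, 3, 4]*c[0, 1, 2, 3, 4] from by decide]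
      exact mul_mem (mul_mem (mul_mem (mul_mem (hb) ha) hb) ha) ha
    · rw [show (c[1, 4, 3] : Perm (Fin 5)) = c[0, 1, 2, 3, 4]*c[0, 1, 2, 3, 4]*(swap 1 3 * swap 2 4)*c[0, 1, 2, 3, 4]*(swap 1 3 * swap 2 4) from by decide]
      exact mul_mem (mul_mem (mul_mem (mul_mem (ha) ha) hb) ha) hb
    · rw [show (c[0, 1, 2] : Perm (Fin 5)) = (swap 1 3 * swap 2 4)*c[0, 1, 2, 3, 4]*c[0, 1, 2, 3, 4]*c[0, 1, 2, 3, 4] from by decide]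
      exact mul_mem (mul_mem (mul_mem (hb) ha) ha) ha
    · rw [show (c[0, 1, 3] : Perm (Fin 5)) = (swap 1 3 * swap 2 4)*c[0, 1, 2, 3, 4]*(swap 1 3 * swap 2 4)*c[0, 1, 2, 3, 4]*c[0, 1, 2, 3, 4]*c[0, 1, 2, 3, 4]*c[0, 1, 2, 3, 4] from by decide]
      exact mul_mem (mul_mem (mul_mem (mul_mem (mul_mem (mul_mem (hb) ha) hb) ha) ha) ha) ha
    · rw [show (c[0, 1, 4] : Perm (Fin 5)) = c[0, 1, 2, 3, 4]*(swap 1 3 * swap 2 4)*c[0, 1, 2, 3, 4]*c[0, 1, 2, 3, 4]*(swap 1 3 * swap 2 4)*c[0, 1, 2, 3, 4] from by decide]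
      exact mul_mem (mul_mem (mul_mem (mul_mem (mul_mem (ha) hb) ha) ha) hb) ha
    · rw [show (c[0, 2, 1] : Perm (Fin 5)) = c[0, 1, 2, 3, 4]*c[0, 1, 2, 3, 4]*(swap 1 3 * swap 2 4) from by decide]
      exact mul_mem (mul_mem (ha) ha) hb
    · rw [show (c[0, 2, 3] : Perm (Fin 5)) = (swap 1 3 * swap 2 4)*c[0, 1, 2, 3, 4]*(swap 1 3 * swap 2 4)*c[0, 1, 2, 3, 4]*(swap 1 3 * swap 2 4) from by decide]
      exact mul_mem (mul_mem (mul_mem (mul_mem (hb) ha) hb) ha) hb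
    · rw [show (c[0, 2, 4] : Perm (Fin 5)) = c[0, 1, 2, 3, 4]*c[0, 1, 2, 3, 4]*c[0, 1, 2, 3, 4]*c[0, 1, 2, 3, 4]*(swap 1 3 * swap 2 4)*c[0, 1, 2, 3, 4]*(swap 1 3 * swap 2 4) from by decide]
      exact mul_mem (mul_mem (mul_mem (mul_mem (mul_mem (mul_mem (ha) ha) ha) ha) hb) ha) hb
    · rw [show (c[0, 3, 1] : Perm (Fin 5)) = c[0, 1, 2, 3, 4]*(swap 1 3 * swap 2 4)*c[0, 1, 2, 3, 4]*c[0, 1, 2, 3, 4]*c[0, 1, 2, 3, 4]*c[0, 1, 2, 3, 4]*(swap 1 3 * swap 2 4) from by decide]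
      exact mul_mem (mul_mem (mul_mem (mul_mem (mul_mem (mul_mem (ha) hb) ha) ha) ha) ha) hb
    · rw [show (c[0, 3, 2] : Perm (Fin 5)) = c[0, 1, 2, 3, 4]*(swap 1 3 * swap 2 4)*c[0, 1, 2, 3, 4]*(swap 1 3 * swap 2 4)*c[0, 1, 2, 3, 4] from by decide]
      exact mul_mem (mul_mem (mul_mem (mul_mem (ha) hb) ha) hb) ha
    · rw [show (c[0, 3, 4] : Perm (Fin 5)) = c[0, 1, 2, 3, 4]*c[0, 1, 2, 3, 4]*c[0, 1, 2, 3, 4]*(swap 1 3 * swap 2 4) from by decide]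
      exact mul_mem (mul_mem (mul_mem (ha) ha) ha) hb
    · rw [show (c[0, 4, 1] : Perm (Fin 5)) = c[0, 1, 2, 3, 4]*(swap 1 3 * swap 2 4)*c[0, 1, 2, 3, 4] from by decide]
      exact mul_mem (mul_mem (ha) hb) ha
    · rw [show (c[0, 4, 2] : Perm (Fin 5)) = (swap 1 3 * swap 2 4)*c[0, 1, 2, 3, 4]*c[0, 1, 2, 3, 4]*c[0, 1, 2, 3, 4]*c[0, 1, 2, 3, 4]*(swap 1 3 * swap 2 4)*c[0, 1, 2, 3, 4] from by decide]
      exact mul_mem (mul_mem (mul_mem (mul_mem (mul_mem (mul_mem (hb) ha) ha) ha) ha) hb) ha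
    · rw [show (c[0, 4, 3] : Perm (Fin 5)) = (swap 1 3 * swap 2 4)*c[0, 1, 2, 3, 4]*c[0, 1, 2, 3, 4] from by decide]
      exact mul_mem (mul_mem (hb) ha) ha

end Stmt19Aux

open Stmt19Aux Equiv Equiv.Perm Subgroup in
/-- Let `γ = (1 2 3 4 5)` in the symmetric group on `{0,...,5}` and let `σ` be an even
involution with `σ 0 = 1`. Then `⟨γ, σ⟩ ≅ A₅` iff `σ = (0 1)(2 5)` or `σ = (0 1)(3 4)`. -/
theorem stmt19 (σ : Equiv.Perm (Fin 6))
    (hσ2 : σ ^ 2 = 1) (hσsign : Equiv.Perm.sign σ = 1) (hσ0 : σ 0 = 1) :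
    Nonempty ((Subgroup.closure {(c[1, 2, 3, 4, 5] : Equiv.Perm (Fin 6)), σ} :
        Subgroup (Equiv.Perm (Fin 6))) ≃* alternatingGroup (Fin 5)) ↔
      (σ = Equiv.swap 0 1 * Equiv.swap 2 5 ∨ σ = Equiv.swap 0 1 * Equiv.swap 3 4) := by
  have hcases := sigma_cases σ hσ2 hσ0 hσsign
  constructor
  · rintro ⟨e⟩
    rcases hcases with rfl | rfl | rfl | rfl | rfl | rfl
    · -- σ = (0 1)(2 3): bad, word γ*γ*σ has order 4
      exfalso
      have hγ : (c[1, 2, 3, 4, 5] : Perm (Fin 6)) ∈ Subgroup.closure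
          {(c[1, 2, 3, 4, 5] : Equiv.Perm (Fin 6)), swap 0 1 * swap 2 3} :=
        subset_closure (Set.mem_insert _ _)
      have hσ : (swap 0 1 * swap 2 3 : Perm (Fin 6)) ∈ Subgroup.closure
          {(c[1, 2, 3, 4, 5] : Equiv.Perm (Fin 6)), swap 0 1 * swap 2 3} :=
        subset_closure (Set.mem_insert_of_mem _ rfl)
      exact bad _ _ (mul_mem (mul_mem hγ hγ) hσ) (by decide) (by decide) e
    · -- σ = (0 1)(2 4): bad, word γ*σ has order 4
      exfalso
      have hγ : (c[1, 2, 3, 4, 5] : Perm (Fin 6)) ∈ Subgroup.closure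
          {(c[1, 2, 3, 4, 5] : Equiv.Perm (Fin 6)), swap 0 1 * swap 2 4} :=
        subset_closure (Set.mem_insert _ _)
      have hσ : (swap 0 1 * swap 2 4 : Perm (Fin 6)) ∈ Subgroup.closure
          {(c[1, 2, 3, 4, 5] : Equiv.Perm (Fin 6)), swap 0 1 * swap 2 4} :=
        subset_closure (Set.mem_insert_of_mem _ rfl)
      exact bad _ _ (mul_mem hγ hσ) (by decide) (by decide) e
    · exact Or.inl rfl
    · exact Or.inr rfl
    · -- σ = (0 1)(3 5): bad, word γ*σ has order 4
      exfalso
      have hγ : (c[1, 2, 3, 4, 5] : Perm (Fin 6)) ∈ Subgroup.closure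
          {(c[1, 2, 3, 4, 5] : Equiv.Perm (Fin 6)), swap 0 1 * swap 3 5} :=
        subset_closure (Set.mem_insert _ _)
      have hσ : (swap 0 1 * swap 3 5 : Perm (Fin 6)) ∈ Subgroup.closure
          {(c[1, 2, 3, 4, 5] : Equiv.Perm (Fin 6)), swap 0 1 * swap 3 5} :=
        subset_closure (Set.mem_insert_of_mem _ rfl)
      exact bad _ _ (mul_mem hγ hσ) (by decide) (by decide) e
    · -- σ = (0 1)(4 5): bad, word γ*γ*σ has order 4
      exfalso
      have hγ : (c[1, 2, 3, 4, 5] : Perm (Fin 6)) ∈ Subgroup.closure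
          {(c[1, 2, 3, 4, 5] : Equiv.Perm (Fin 6)), swap 0 1 * swap 4 5} :=
        subset_closure (Set.mem_insert _ _)
      have hσ : (swap 0 1 * swap 4 5 : Perm (Fin 6)) ∈ Subgroup.closure
          {(c[1, 2, 3, 4, 5] : Equiv.Perm (Fin 6)), swap 0 1 * swap 4 5} :=
        subset_closure (Set.mem_insert_of_mem _ rfl)
      exact bad _ _ (mul_mem (mul_mem hγ hγ) hσ) (by decide) (by decide) e
  · rintro (rfl | rfl)
    · exact good _ _ hσ1t gen1
    · exact good _ _ hσ2t gen2
end
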